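/- arXiv:1602.08744 — 9 statements merged into one kernel-verified Lean document; each statement's English description precedes it below -/
import Mathlib

section
/- Let W be a finite-dimensional real vector space and let Q, R : W → ℝ be continuous functions such that R(w) > 0 for all w ≠ 0. Suppose there exists an endomorphism E of W such that the one-parameter group t^E = exp((log t)E) is contracting (i.e., ‖t^E‖ → 0 as t → 0⁺) and both Q and R are homogeneous with respect to {t^E}, meaning tQ(w) = Q(t^E w) and tR(w) = R(t^E w) for all t > 0 and w ∈ W. Then there exists a constant C > 0 such that Q(w) ≤ C·R(w) for all w ∈ W. -/
/-!
A homogeneous function is determined by its values on the unit sphere: since `t ^ E` contracts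
as `t → 0⁺` and, being a group, expands as `t → ∞`, every orbit of a nonzero vector crosses the
sphere. On the compact sphere `Q ≤ C * R` for some `C > 0` because `R` is positive there, and
homogeneity of both sides transports this inequality along the orbits to all of `W`.
-/

open Filter Topology Set

noncomputable section

/-- The paper's `t ^ a`; meaningful only for `t > 0`. -/
def dilation {𝔸 : Type*} [NormedRing 𝔸] [NormedAlgebra ℝ 𝔸] (a : 𝔸) (t : ℝ) : 𝔸 :=
  NormedSpace.exp (Real.log t • a)

def IsContracting {𝔸 : Type*} [NormedRing 𝔸] [NormedAlgebra ℝ 𝔸] (a : 𝔸) : Prop :=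
  Tendsto (fun t => ‖dilation a t‖) (𝓝[>] 0) (𝓝 0)

def IsHomogeneous {W : Type*} [NormedAddCommGroup W] [NormedSpace ℝ W] (E : W →L[ℝ] W)
    (f : W → ℝ) : Prop :=
  ∀ t : ℝ, 0 < t → ∀ w : W, t * f w = f (dilation E t w)

end

section Dilation

variable {𝔸 : Type*} [NormedRing 𝔸] [NormedAlgebra ℝ 𝔸] [CompleteSpace 𝔸] (a : 𝔸)

theorem dilation_mul {s t : ℝ} (hs : 0 < s) (ht : 0 < t) :
    dilation a (s * t) = dilation a s * dilation a t := by
  let +nondep : NormedAlgebra ℚ 𝔸 := .restrictScalars ℚ ℝ 𝔸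
  rw [dilation, Real.log_mul hs.ne' ht.ne', add_smul,
    NormedSpace.exp_add_of_commute (((Commute.refl a).smul_left _).smul_right _), dilation, dilation]

theorem dilation_mul_inv {t : ℝ} (ht : 0 < t) : dilation a t * dilation a t⁻¹ = 1 := by
  rw [← dilation_mul a ht (inv_pos.mpr ht), mul_inv_cancel₀ ht.ne', dilation, Real.log_one,
    zero_smul, NormedSpace.exp_zero]

theorem continuousOn_dilation : ContinuousOn (dilation a) (Ioi 0) := by
  let +nondep : NormedAlgebra ℚ 𝔸 := .restrictScalars ℚ ℝ 𝔸
  exact NormedSpace.exp_continuous.comp_continuousOn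
    ((Real.continuousOn_log.mono fun _ ht => (mem_Ioi.mp ht).ne').smul continuousOn_const)

end Dilation

theorem IsContracting.exists_norm_mul_lt {𝔸 : Type*} [NormedRing 𝔸] [NormedAlgebra ℝ 𝔸]
    {a : 𝔸} (ha : IsContracting a) (c : ℝ) {r : ℝ} (hr : 0 < r) :
    ∃ t > 0, ‖dilation a t‖ * c < r := by
  have hsmall : ∀ᶠ t in 𝓝[>] 0, ‖dilation a t‖ * c < r :=
    (ha.mul_const c).eventually (eventually_lt_nhds (by rwa [zero_mul]))
  exact (hsmall.and self_mem_nhdsWithin).exists.imp fun t ⟨hlt, hpos⟩ => ⟨hpos, hlt⟩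

section Orbits

variable {W : Type*} [NormedAddCommGroup W] [NormedSpace ℝ W] {E : W →L[ℝ] W}

theorem IsContracting.exists_norm_dilation_apply_lt (hE : IsContracting E) (w : W) {r : ℝ}
    (hr : 0 < r) : ∃ t > 0, ‖dilation E t w‖ < r := by
  obtain ⟨t, ht, hlt⟩ := hE.exists_norm_mul_lt ‖w‖ hr
  exact ⟨t, ht, ((dilation E t).le_opNorm w).trans_lt hlt⟩

theorem IsContracting.exists_lt_norm_dilation_apply [CompleteSpace W] (hE : IsContracting E)
    {w : W} (hw : w ≠ 0) (r : ℝ) : ∃ t > 0, r < ‖dilation E t w‖ := by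
  obtain ⟨s, hs, hlt⟩ := hE.exists_norm_mul_lt r (norm_pos_iff.mpr hw)
  refine ⟨s⁻¹, inv_pos.mpr hs, lt_of_not_ge fun hle => hlt.not_ge ?_⟩
  calc ‖w‖ = ‖dilation E s (dilation E s⁻¹ w)‖ := by
        rw [← mul_apply_eq_comp, dilation_mul_inv E hs, one_apply_eq_self]
    _ ≤ ‖dilation E s‖ * ‖dilation E s⁻¹ w‖ := (dilation E s).le_opNorm _
    _ ≤ ‖dilation E s‖ * r := by gcongr

theorem IsContracting.exists_norm_dilation_apply_eq [CompleteSpace W] (hE : IsContracting E) {w : W} (hw : w ≠ 0)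
    {r : ℝ} (hr : 0 < r) : ∃ t > 0, ‖dilation E t w‖ = r := by
  obtain ⟨t₀, ht₀, hlt⟩ := hE.exists_norm_dilation_apply_lt w hr
  obtain ⟨t₁, ht₁, hgt⟩ := hE.exists_lt_norm_dilation_apply hw r
  have hsub : uIcc t₀ t₁ ⊆ Ioi 0 := fun t ht => (lt_min ht₀ ht₁).trans_le ht.1
  have hcont : ContinuousOn (fun t => ‖dilation E t w‖) (uIcc t₀ t₁) :=
    (((ContinuousLinearMap.apply ℝ W w).continuous.comp_continuousOn
      (continuousOn_dilation E)).norm).mono hsub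
  obtain ⟨t, ht, heq⟩ := intermediate_value_uIcc hcont (mem_uIcc_of_le hlt.le hgt.le)
  exact ⟨t, hsub ht, heq⟩

end Orbits

section Homogeneous

variable {W : Type*} [NormedAddCommGroup W] [NormedSpace ℝ W] {E : W →L[ℝ] W} {f : W → ℝ}

theorem IsHomogeneous.map_zero (hf : IsHomogeneous E f) : f 0 = 0 := by
  have h := hf 2 two_pos 0
  rw [(dilation E 2).map_zero, mul_comm] at h
  linarith

theorem IsHomogeneous.le_mul_of_le_mul_on_sphere [CompleteSpace W] (hE : IsContracting E)
    {Q R : W → ℝ} (hQ : IsHomogeneous E Q) (hR : IsHomogeneous E R) {C : ℝ}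
    (hsphere : ∀ v ∈ Metric.sphere (0 : W) 1, Q v ≤ C * R v) (w : W) : Q w ≤ C * R w := by
  rcases eq_or_ne w 0 with rfl | hw
  · rw [hQ.map_zero, hR.map_zero, mul_zero]
  obtain ⟨t, ht, hnorm⟩ := hE.exists_norm_dilation_apply_eq hw one_pos
  have h := hsphere _ (mem_sphere_zero_iff_norm.mpr hnorm)
  rw [← hQ t ht, ← hR t ht, mul_left_comm] at h
  exact le_of_mul_le_mul_left h ht

end Homogeneous

theorem IsCompact.exists_pos_le_mul {X : Type*} [TopologicalSpace X] {K : Set X}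
    (hK : IsCompact K) {f g : X → ℝ} (hf : ContinuousOn f K) (hg : ContinuousOn g K)
    (hpos : ∀ x ∈ K, 0 < g x) : ∃ C > 0, ∀ x ∈ K, f x ≤ C * g x := by
  obtain ⟨C, hC⟩ := hK.exists_bound_of_continuousOn (hf.div hg fun x hx => (hpos x hx).ne')
  refine ⟨max C 1, by positivity, fun x hx => ?_⟩
  rw [← div_le_iff₀ (hpos x hx)]
  exact (le_abs_self _).trans ((hC x hx).trans (le_max_left C 1))

/-- If Q, R are continuous on a finite-dimensional real normed space W, R is positive away
from 0, and both are homogeneous with respect to a contracting one-parameter group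
t^E = exp((log t)•E), then Q ≤ C·R for some C > 0. -/
theorem comparable_of_homogeneous {W : Type*} [NormedAddCommGroup W] [NormedSpace ℝ W]
    [FiniteDimensional ℝ W]
    (Q R : W → ℝ) (hQcont : Continuous Q) (hRcont : Continuous R)
    (hRpos : ∀ w : W, w ≠ 0 → 0 < R w)
    (E : W →L[ℝ] W)
    (hcontract : Tendsto (fun t : ℝ => ‖NormedSpace.exp ((Real.log t) • E)‖)
      (nhdsWithin 0 (Set.Ioi 0)) (nhds 0))
    (hQhom : ∀ t : ℝ, 0 < t → ∀ w : W,
      t * Q w = Q ((NormedSpace.exp ((Real.log t) • E)) w))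
    (hRhom : ∀ t : ℝ, 0 < t → ∀ w : W,
      t * R w = R ((NormedSpace.exp ((Real.log t) • E)) w)) :
    ∃ C : ℝ, 0 < C ∧ ∀ w : W, Q w ≤ C * R w := by
  obtain ⟨C, hC, hCsphere⟩ := (isCompact_sphere (0 : W) 1).exists_pos_le_mul
    hQcont.continuousOn hRcont.continuousOn
    fun v hv => hRpos v (ne_zero_of_mem_sphere one_ne_zero ⟨v, hv⟩)
  exact ⟨C, hC, IsHomogeneous.le_mul_of_le_mul_on_sphere (E := E) hcontract hQhom hRhom hCsphere⟩
end

section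
/- Let W be a finite-dimensional real vector space and P : W → ℂ a nondegenerate polynomial (P(w) ≠ 0 for all w ≠ 0) which is homogeneous with respect to a contracting one-parameter group {t^E} for some diagonalizable endomorphism E with positive real spectrum. Then |P(ξ)| → ∞ as |ξ| → ∞. -/
/-!
Since `t ^ E` contracts, `s ↦ s ^ E ξ` runs from `0` (at `s = 0`) to `ξ` (at `s = 1`), so for
`‖ξ‖ ≥ 1` some `s ∈ (0, 1]` puts `s ^ E ξ` on the unit sphere. There `|P| ≥ m > 0` by compactness
and nondegeneracy, and homogeneity gives `|P ξ| = s⁻¹ |P (s ^ E ξ)| ≥ m / s`. In eigencoordinates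
of `E` the contraction `s ^ E` shrinks vectors by at most a factor `s ^ c` with `c ≥ max spec E`,
so `‖ξ‖ ≲ s⁻ᶜ` and `|P ξ| ≳ ‖ξ‖ ^ (1 / c)`.
-/

open Filter Matrix Set

section Homogeneous

variable {V : Type*} [NormedAddCommGroup V]

theorem exists_mem_Ioc_norm_eq_of_continuous {γ : ℝ → V} (hγ : Continuous γ) (h0 : γ 0 = 0)
    {r : ℝ} (hr : 0 < r) (h1 : r ≤ ‖γ 1‖) : ∃ s ∈ Ioc (0 : ℝ) 1, ‖γ s‖ = r := by
  obtain ⟨s, hs, hγs⟩ := intermediate_value_Icc zero_le_one hγ.norm.continuousOn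
    (show r ∈ Icc ‖γ 0‖ ‖γ 1‖ by simp [h0, hr.le, h1])
  refine ⟨s, ⟨lt_of_le_of_ne hs.1 ?_, hs.2⟩, hγs⟩
  rintro rfl
  simp [h0, hr.ne] at hγs

theorem tendsto_cobounded_atTop_of_homogeneous [ProperSpace V] {f : V → ℝ} (hf : Continuous f)
    (hpos : ∀ v ≠ 0, 0 < f v) (δ : ℝ → V → V) (hδ : ∀ v, Continuous fun s => δ s v)
    (hδ0 : ∀ v, δ 0 v = 0) (hδ1 : ∀ v, δ 1 v = v) (hhom : ∀ s > 0, ∀ v, f (δ s v) = s * f v)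
    {c K : ℝ} (hc : 0 < c) (hK : 0 < K)
    (hgrowth : ∀ s ∈ Ioc (0 : ℝ) 1, ∀ v, s ^ c * ‖v‖ ≤ K * ‖δ s v‖) :
    Tendsto f (Bornology.cobounded V) atTop := by
  obtain ⟨m, hm, hmf⟩ := (isCompact_sphere (0 : V) 1).exists_forall_le' hf.continuousOn
    fun η hη => hpos η (ne_zero_of_mem_unit_sphere ⟨η, hη⟩)
  have hlower : ∀ ξ, 1 ≤ ‖ξ‖ → m * (‖ξ‖ / K) ^ c⁻¹ ≤ f ξ := by
    intro ξ hξ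
    obtain ⟨s, ⟨hs0, hs1⟩, hδs⟩ :=
      exists_mem_Ioc_norm_eq_of_continuous (hδ ξ) (hδ0 ξ) one_pos (by rwa [hδ1])
    have hm_le : m ≤ f ξ * s := by
      rw [mul_comm, ← hhom s hs0]
      exact hmf _ (mem_sphere_zero_iff_norm.2 hδs)
    have hξ_le : (‖ξ‖ / K) ^ c⁻¹ ≤ s⁻¹ := by
      have := hgrowth s ⟨hs0, hs1⟩ ξ
      rw [hδs, mul_one] at this
      rw [Real.rpow_inv_le_iff_of_pos (by positivity) (by positivity) hc,
        Real.inv_rpow hs0.le, div_le_iff₀ hK, inv_mul_eq_div, le_div_iff₀ (by positivity)]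
      linarith
    calc m * (‖ξ‖ / K) ^ c⁻¹ ≤ m * s⁻¹ := by gcongr
      _ ≤ f ξ := (mul_inv_le_iff₀ hs0).2 hm_le
  have hpower : Tendsto (fun ξ : V => m * (‖ξ‖ / K) ^ c⁻¹) (Bornology.cobounded V) atTop :=
    (((tendsto_rpow_atTop (inv_pos.2 hc)).comp (tendsto_id.atTop_div_const hK)).const_mul_atTop
      hm).comp tendsto_norm_cobounded_atTop
  exact tendsto_atTop_mono' _ ((tendsto_norm_cobounded_atTop.eventually_ge_atTop 1).mono hlower)
    hpower

end Homogeneous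

section ConjDiagonal

variable {n : Type*} [Fintype n] [DecidableEq n] (B : Matrix n n ℝ) (D : n → ℝ)

theorem exp_log_smul_conj_diagonal (hB : IsUnit B) {t : ℝ} (ht : 0 < t) :
    NormedSpace.exp (Real.log t • (B * diagonal D * B⁻¹)) =
      B * diagonal (fun i => t ^ D i) * B⁻¹ := by
  rw [← smul_mul_assoc, ← mul_smul_comm, exp_conj _ _ hB, ← diagonal_smul, exp_diagonal]
  congr 3
  funext i
  simp [Real.rpow_def_of_pos ht, ← Real.exp_eq_exp_ℝ]

theorem continuous_conj_diagonal_rpow_mulVec (hD : ∀ i, 0 ≤ D i) (v : n → ℝ) :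
    Continuous fun s : ℝ => (B * diagonal (fun i => s ^ D i) * B⁻¹) *ᵥ v := by
  refine Continuous.matrix_mulVec ?_ continuous_const
  refine (continuous_const.matrix_mul ?_).matrix_mul continuous_const
  exact continuous_pi fun i => continuous_pi fun j => by
    by_cases hij : i = j <;> simp [hij, Real.continuous_rpow_const (hD j), continuous_const]

theorem rpow_mul_norm_le_norm_diagonal_rpow_mulVec {c s : ℝ} (hc : ∀ i, D i ≤ c)
    (hs : s ∈ Ioc (0 : ℝ) 1) (w : n → ℝ) :
    s ^ c * ‖w‖ ≤ ‖diagonal (fun i => s ^ D i) *ᵥ w‖ := by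
  have hsc : 0 ≤ s ^ c := Real.rpow_nonneg hs.1.le c
  rw [← Real.norm_of_nonneg hsc, ← norm_smul]
  refine (pi_norm_le_iff_of_nonneg (norm_nonneg _)).2 fun i => ?_
  calc ‖(s ^ c • w) i‖ = s ^ c * ‖w i‖ := by simp [Real.norm_of_nonneg hsc]
    _ ≤ s ^ D i * ‖w i‖ := mul_le_mul_of_nonneg_right
        (Real.rpow_le_rpow_of_exponent_ge hs.1 hs.2 (hc i)) (norm_nonneg _)
    _ = ‖(diagonal (fun i => s ^ D i) *ᵥ w) i‖ := by
        simp [mulVec_diagonal, Real.norm_of_nonneg (Real.rpow_nonneg hs.1.le _)]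
    _ ≤ _ := norm_le_pi_norm _ i

attribute [local instance] Matrix.linftyOpNormedAddCommGroup in
theorem exists_rpow_mul_norm_le_norm_conj_diagonal_rpow_mulVec (hB : IsUnit B) {c : ℝ}
    (hc : ∀ i, D i ≤ c) : ∃ K > 0, ∀ s ∈ Ioc (0 : ℝ) 1, ∀ v,
      s ^ c * ‖v‖ ≤ K * ‖(B * diagonal (fun i => s ^ D i) * B⁻¹) *ᵥ v‖ := by
  have hdet := (isUnit_iff_isUnit_det B).mp hB
  refine ⟨‖B‖ * ‖B⁻¹‖ + 1, by positivity, fun s hs v => ?_⟩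
  set N := B * diagonal (fun i => s ^ D i) * B⁻¹
  have hinv : B⁻¹ *ᵥ (N *ᵥ v) = diagonal (fun i => s ^ D i) *ᵥ (B⁻¹ *ᵥ v) := by
    simp only [N, mulVec_mulVec, ← Matrix.mul_assoc, nonsing_inv_mul _ hdet, Matrix.one_mul]
  have hsc : 0 ≤ s ^ c := Real.rpow_nonneg hs.1.le c
  calc s ^ c * ‖v‖ = s ^ c * ‖B *ᵥ (B⁻¹ *ᵥ v)‖ := by
        rw [mulVec_mulVec, mul_nonsing_inv _ hdet, one_mulVec]
    _ ≤ s ^ c * (‖B‖ * ‖B⁻¹ *ᵥ v‖) := by gcongr; exact linfty_opNorm_mulVec _ _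
    _ = ‖B‖ * (s ^ c * ‖B⁻¹ *ᵥ v‖) := by ring
    _ ≤ ‖B‖ * ‖B⁻¹ *ᵥ (N *ᵥ v)‖ := by
        rw [hinv]; gcongr; exact rpow_mul_norm_le_norm_diagonal_rpow_mulVec D hc hs _
    _ ≤ ‖B‖ * (‖B⁻¹‖ * ‖N *ᵥ v‖) := by gcongr; exact linfty_opNorm_mulVec _ _
    _ ≤ (‖B‖ * ‖B⁻¹‖ + 1) * ‖N *ᵥ v‖ := by nlinarith [norm_nonneg (N *ᵥ v)]

end ConjDiagonal

/-- A nondegenerate polynomial on ℝ^d, homogeneous with respect to the contracting group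
{t^E} for a diagonalizable E with positive real spectrum, blows up at infinity. -/
theorem abs_tendsto_atTop_of_nondegenerate_homogeneous {d : ℕ}
    (p : MvPolynomial (Fin d) ℂ) (P : (Fin d → ℝ) → ℂ)
    (hP : ∀ ξ : Fin d → ℝ, P ξ = MvPolynomial.eval (fun i => (ξ i : ℂ)) p)
    (hnondeg : ∀ ξ : Fin d → ℝ, ξ ≠ 0 → P ξ ≠ 0)
    (E B : Matrix (Fin d) (Fin d) ℝ) (D : Fin d → ℝ)
    (hB : IsUnit B) (hD : ∀ i, 0 < D i)
    (hdiag : E = B * Matrix.diagonal D * B⁻¹)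
    (hhom : ∀ t : ℝ, 0 < t → ∀ ξ : Fin d → ℝ,
      P ((NormedSpace.exp ((Real.log t) • E)).mulVec ξ) = (t : ℂ) * P ξ) :
    Tendsto (fun ξ : Fin d → ℝ => ‖P ξ‖) (Bornology.cobounded (Fin d → ℝ)) atTop := by
  obtain ⟨M, hM⟩ := (finite_range D).bddAbove
  have hDc : ∀ i, D i ≤ max M 1 := fun i => (hM ⟨i, rfl⟩).trans (le_max_left _ _)
  obtain ⟨K, hK, hgrowth⟩ := exists_rpow_mul_norm_le_norm_conj_diagonal_rpow_mulVec B D hB hDc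
  have hPcont : Continuous P := by
    rw [funext hP]
    exact (MvPolynomial.continuous_eval p).comp (by fun_prop)
  refine tendsto_cobounded_atTop_of_homogeneous hPcont.norm
    (fun ξ hξ => norm_pos_iff.2 (hnondeg ξ hξ))
    (fun s ξ => (B * diagonal (fun i => s ^ D i) * B⁻¹) *ᵥ ξ)
    (continuous_conj_diagonal_rpow_mulVec B D fun i => (hD i).le) (fun ξ => ?_) (fun ξ => ?_)
    (fun s hs ξ => ?_) (lt_max_of_lt_right one_pos) hK hgrowth
  · simp [Real.zero_rpow (hD _).ne']
  · simp [mul_nonsing_inv _ ((isUnit_iff_isUnit_det B).mp hB)]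
  · rw [← exp_log_smul_conj_diagonal B D hB hs, ← hdiag, hhom s hs, norm_mul, Complex.norm_real,
      Real.norm_of_nonneg hs.le]
end

section
/- Let P : W → ℂ be a nondegenerate-homogeneous polynomial on a finite-dimensional real vector space W, and define Sym(P) = {O ∈ End(W) : P(Oξ) = P(ξ) for all ξ ∈ W}. Then Sym(P) is a compact subgroup of GL(W). -/
/-!
In an eigenbasis of `F`, the homogeneity of `P` says that `|P|` grows exactly like `exp u` along
each orbit of the flow `u ↦ exp (u • F)`. Nondegeneracy and continuity force all eigenvalues of `F`
to be positive, so every orbit of a nonzero vector crosses the unit sphere, where `|P|` is bounded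
below by some `m > 0`; hence the sublevel sets of `|P|` are bounded. A symmetry `O` preserves `P`,
so it maps the basis vectors into one such sublevel set, which bounds its entries. Injectivity
comes from `P 0 = 0` and nondegeneracy.
-/

open Filter Topology Bornology Matrix

def SymSet {d : ℕ} (P : (Fin d → ℝ) → ℂ) : Set (Matrix (Fin d) (Fin d) ℝ) :=
  {O | ∀ ξ : Fin d → ℝ, P (O.mulVec ξ) = P ξ}

namespace Dilation

variable {ι : Type*} (D : ι → ℝ)

/-- The flow `t ^ F = exp (u • F)`, `t = exp u`, written in an eigenbasis of `F`. -/
noncomputable def dilate (u : ℝ) (ξ : ι → ℝ) : ι → ℝ := fun i => Real.exp (u * D i) * ξ i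

lemma diagonal_mulVec_eq_dilate [Fintype ι] [DecidableEq ι] (u : ℝ) (ξ : ι → ℝ) :
    diagonal (fun i => Real.exp (u * D i)) *ᵥ ξ = dilate D u ξ :=
  funext fun i => mulVec_diagonal _ _ i

lemma dilate_dilate (u v : ℝ) (ξ : ι → ℝ) : dilate D u (dilate D v ξ) = dilate D (u + v) ξ := by
  ext i; simp only [dilate, add_mul, Real.exp_add]; ring

lemma dilate_neg_dilate (u : ℝ) (ξ : ι → ℝ) : dilate D (-u) (dilate D u ξ) = ξ := by
  rw [dilate_dilate, neg_add_cancel]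
  ext i; simp [dilate]

lemma continuous_dilate (u : ℝ) : Continuous (dilate D u) := by
  unfold dilate; fun_prop

lemma continuous_dilate_left (ξ : ι → ℝ) : Continuous fun u => dilate D u ξ := by
  unfold dilate; fun_prop

variable {D} {Q : (ι → ℝ) → ℂ}

lemma pos_of_homogeneous (hQ : Continuous Q) (hnd : ∀ ξ, ξ ≠ 0 → Q ξ ≠ 0)
    (hhom : ∀ u ξ, Q (dilate D u ξ) = Real.exp u * Q ξ) (i : ι) : 0 < D i := by
  classical
  -- If `D i ≤ 0`, the orbit of `e i` stays in the segment `[0, 1] • e i`, where `Q` is bounded.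
  by_contra! hDi
  set e : ι → ℝ := Pi.single i 1
  have he : Q e ≠ 0 := hnd e (by simp [e])
  have hline : ∀ u, dilate D u e = Real.exp (u * D i) • e := fun u => by
    ext j; by_cases hj : j = i <;> simp [dilate, e, hj]
  obtain ⟨C, hC⟩ := (isCompact_Icc (a := (0 : ℝ)) (b := 1)).exists_bound_of_continuousOn
    (f := fun s : ℝ => Q (s • e)) (by fun_prop)
  have hbound : ∀ u, 0 ≤ u → Real.exp u * ‖Q e‖ ≤ C := fun u hu => by
    have := hC (Real.exp (u * D i))
      ⟨(Real.exp_pos _).le, Real.exp_le_one_iff.2 (mul_nonpos_of_nonneg_of_nonpos hu hDi)⟩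
    rwa [← hline, hhom, norm_mul, Complex.norm_real, Real.norm_of_nonneg (Real.exp_pos _).le]
      at this
  obtain ⟨u, hCu, hu⟩ := (((Real.tendsto_exp_atTop.atTop_mul_const (norm_pos_iff.2 he)
    ).eventually_gt_atTop C).and (eventually_ge_atTop 0)).exists
  linarith [hbound u hu]

lemma tendsto_dilate_atBot (hD : ∀ i, 0 < D i) (ξ : ι → ℝ) :
    Tendsto (fun u => dilate D u ξ) atBot (𝓝 0) := by
  refine tendsto_pi_nhds.2 fun i => ?_
  simpa [dilate] using (Real.tendsto_exp_atBot.comp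
    (tendsto_id.atBot_mul_const (hD i))).mul_const (ξ i)

variable [Fintype ι]

lemma norm_dilate_mono (hD : ∀ i, 0 ≤ D i) (ξ : ι → ℝ) : Monotone fun u => ‖dilate D u ξ‖ := by
  intro u v huv
  refine (pi_norm_le_iff_of_nonneg (norm_nonneg _)).2 fun i => le_trans ?_ (norm_le_pi_norm _ i)
  simp only [dilate, norm_mul, Real.norm_eq_abs, abs_of_pos (Real.exp_pos _)]
  gcongr
  exact hD i

lemma tendsto_norm_dilate_atTop (hD : ∀ i, 0 < D i) {ξ : ι → ℝ} (hξ : ξ ≠ 0) :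
    Tendsto (fun u => ‖dilate D u ξ‖) atTop atTop := by
  obtain ⟨i, hi⟩ := Function.ne_iff.1 hξ
  have hcoord : Tendsto (fun u => Real.exp (u * D i) * |ξ i|) atTop atTop :=
    (Real.tendsto_exp_atTop.comp (tendsto_id.atTop_mul_const (hD i))).atTop_mul_const
      (abs_pos.2 hi)
  refine tendsto_atTop_mono (fun u => ?_) hcoord
  simpa [dilate, abs_mul] using norm_le_pi_norm (dilate D u ξ) i

lemma exists_norm_dilate_eq_one (hD : ∀ i, 0 < D i) {ξ : ι → ℝ} (hξ : ξ ≠ 0) :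
    ∃ u, ‖dilate D u ξ‖ = 1 := by
  have hsmall : ∃ u, ‖dilate D u ξ‖ ≤ 1 := by
    exact ((tendsto_zero_iff_norm_tendsto_zero.1 (tendsto_dilate_atBot hD ξ)).eventually_le_const
      zero_lt_one).exists
  exact mem_range_of_exists_le_of_exists_ge (continuous_dilate_left D ξ).norm hsmall
    ((tendsto_norm_dilate_atTop hD hξ).eventually_ge_atTop 1).exists

lemma isBounded_sublevel_of_homogeneous (hQ : Continuous Q) (hnd : ∀ ξ, ξ ≠ 0 → Q ξ ≠ 0)
    (hhom : ∀ u ξ, Q (dilate D u ξ) = Real.exp u * Q ξ) (c : ℝ) :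
    IsBounded {ξ | ‖Q ξ‖ ≤ c} := by
  have hD := pos_of_homogeneous hQ hnd hhom
  have hsphere := isCompact_sphere (0 : ι → ℝ) 1
  obtain ⟨m, hm, hmQ⟩ := hsphere.exists_forall_le' hQ.norm.continuousOn
    fun η hη => norm_pos_iff.2 (hnd η (ne_zero_of_mem_unit_sphere ⟨η, hη⟩))
  obtain ⟨C, hC⟩ := hsphere.exists_bound_of_continuousOn
    (continuous_dilate D (Real.log (c / m))).continuousOn
  refine isBounded_iff_forall_norm_le.2 ⟨max C 0, fun ξ hξ => ?_⟩
  rcases eq_or_ne ξ 0 with rfl | hξ0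
  · simp
  obtain ⟨v, hv⟩ := exists_norm_dilate_eq_one hD hξ0
  set η := dilate D v ξ
  have hη : η ∈ Metric.sphere 0 1 := by simpa using hv
  have hξη : dilate D (-v) η = ξ := dilate_neg_dilate D v ξ
  have hmc : Real.exp (-v) * m ≤ c := calc
    Real.exp (-v) * m ≤ Real.exp (-v) * ‖Q η‖ := by gcongr; exact hmQ η hη
    _ = ‖Q (dilate D (-v) η)‖ := by
      rw [hhom (-v) η, norm_mul, Complex.norm_real, Real.norm_of_nonneg (Real.exp_pos _).le]
    _ = ‖Q ξ‖ := by rw [hξη]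
    _ ≤ c := hξ
  have hv_le : -v ≤ Real.log (c / m) := by
    have hc : 0 < c := (by positivity : 0 < Real.exp (-v) * m).trans_le hmc
    rwa [Real.le_log_iff_exp_le (div_pos hc hm), le_div_iff₀ hm]
  calc ‖ξ‖ = ‖dilate D (-v) η‖ := by rw [hξη]
    _ ≤ ‖dilate D (Real.log (c / m)) η‖ := norm_dilate_mono (fun i => (hD i).le) η hv_le
    _ ≤ max C 0 := (hC η hη).trans (le_max_left _ _)

end Dilation

section SymSet

variable {d : ℕ} {P : (Fin d → ℝ) → ℂ}

lemma one_mem_symSet (P : (Fin d → ℝ) → ℂ) : (1 : Matrix (Fin d) (Fin d) ℝ) ∈ SymSet P :=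
  fun ξ => by rw [one_mulVec]

lemma mul_mem_symSet {O₁ O₂ : Matrix (Fin d) (Fin d) ℝ} (h₁ : O₁ ∈ SymSet P)
    (h₂ : O₂ ∈ SymSet P) : O₁ * O₂ ∈ SymSet P :=
  fun ξ => by rw [← mulVec_mulVec, h₁, h₂]

lemma isUnit_of_mem_symSet (hP0 : P 0 = 0) (hnd : ∀ ξ, ξ ≠ 0 → P ξ ≠ 0)
    {O : Matrix (Fin d) (Fin d) ℝ} (hO : O ∈ SymSet P) : IsUnit O := by
  rw [isUnit_iff_isUnit_det, isUnit_iff_ne_zero]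
  intro hdet
  obtain ⟨ξ, hξ, hOξ⟩ := exists_mulVec_eq_zero_iff.2 hdet
  exact hnd ξ hξ (by rw [← hO ξ, hOξ, hP0])

lemma inv_mem_symSet {O : Matrix (Fin d) (Fin d) ℝ} (hO : O ∈ SymSet P) (hu : IsUnit O) :
    O⁻¹ ∈ SymSet P := fun ξ => by
  simpa [mulVec_mulVec, mul_nonsing_inv O ((isUnit_iff_isUnit_det O).1 hu)]
    using (hO (O⁻¹ *ᵥ ξ)).symm

lemma isClosed_symSet (hP : Continuous P) : IsClosed (SymSet P) := by
  simp only [SymSet, Set.ofPred_forall]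
  exact isClosed_iInter fun ξ =>
    isClosed_eq (hP.comp (continuous_id.matrix_mulVec continuous_const)) continuous_const

lemma isCompact_symSet (hP : Continuous P) (hb : ∀ c, IsBounded {ξ | ‖P ξ‖ ≤ c}) :
    IsCompact (SymSet P) := by
  obtain ⟨C, hC⟩ := isBounded_iff_forall_norm_le.1 (hb (∑ j, ‖P (Pi.single j 1)‖))
  have hbox :
      IsCompact (Set.univ.pi fun _ : Fin d => Set.univ.pi fun _ : Fin d => Set.Icc (-C) C) :=
    isCompact_univ_pi fun _ => isCompact_univ_pi fun _ => isCompact_Icc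
  refine hbox.of_isClosed_subset (isClosed_symSet hP)
    fun (O : Matrix (Fin d) (Fin d) ℝ) hO i _ j _ => abs_le.1 ?_
  have hcol : ‖O *ᵥ Pi.single j 1‖ ≤ C := hC _ <| by
    rw [Set.mem_ofPred_eq, hO]
    exact Finset.single_le_sum (f := fun j => ‖P (Pi.single j 1)‖) (fun _ _ => norm_nonneg _)
      (Finset.mem_univ j)
  calc |O i j| = ‖(O *ᵥ Pi.single j 1) i‖ := by
        rw [congrFun (mulVec_single_one O j) i, col_apply, Real.norm_eq_abs]
    _ ≤ C := (norm_le_pi_norm _ i).trans hcol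

end SymSet

lemma exp_smul_conj_diagonal {m : Type*} [Fintype m] [DecidableEq m] {B : Matrix m m ℝ}
    (hB : IsUnit B) (D : m → ℝ) (u : ℝ) :
    NormedSpace.exp (u • (B * diagonal D * B⁻¹)) =
      B * diagonal (fun i => Real.exp (u * D i)) * B⁻¹ := by
  have hsmul : u • (B * diagonal D * B⁻¹) = B * diagonal (u • D) * B⁻¹ := by
    rw [diagonal_smul, mul_smul_comm, smul_mul_assoc]
  rw [hsmul, exp_conj B _ hB, exp_diagonal]
  congr
  ext i
  simp [Real.exp_eq_exp_ℝ]

lemma isBounded_sublevel_of_conj_homogeneous {m : Type*} [Fintype m] [DecidableEq m]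
    {P : (m → ℝ) → ℂ} (hP : Continuous P) (hnd : ∀ ξ, ξ ≠ 0 → P ξ ≠ 0) {B : Matrix m m ℝ}
    (hB : IsUnit B) {D : m → ℝ}
    (hhom : ∀ u ξ, P ((B * diagonal (fun i => Real.exp (u * D i)) * B⁻¹) *ᵥ ξ) = Real.exp u * P ξ)
    (c : ℝ) : IsBounded {ξ | ‖P ξ‖ ≤ c} := by
  have hdet : IsUnit B.det := (isUnit_iff_isUnit_det B).1 hB
  set Q : (m → ℝ) → ℂ := fun ζ => P (B *ᵥ ζ)
  have hQhom : ∀ u ζ, Q (Dilation.dilate D u ζ) = Real.exp u * Q ζ := fun u ζ => by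
    rw [← hhom, mulVec_mulVec, Matrix.nonsing_inv_mul_cancel_right B _ hdet, ← mulVec_mulVec,
      Dilation.diagonal_mulVec_eq_dilate]
  have hQ : IsBounded {ζ | ‖Q ζ‖ ≤ c} := Dilation.isBounded_sublevel_of_homogeneous
    (hP.comp (continuous_const.matrix_mulVec continuous_id))
    (fun ζ hζ => hnd _ ((mulVec_injective_iff_isUnit.2 hB).ne hζ |>.trans_eq (mulVec_zero B)))
    hQhom c
  refine ((B.mulVecLin.toContinuousLinearMap).lipschitz.isBounded_image hQ).subset
    fun ξ hξ => ⟨B⁻¹ *ᵥ ξ, ?_, ?_⟩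
  · simpa [Q, mulVec_mulVec, mul_nonsing_inv _ hdet] using hξ
  · simp [mulVec_mulVec, mul_nonsing_inv _ hdet]

/-- For a nondegenerate-homogeneous polynomial P, Sym(P) is a compact subgroup of GL. -/
theorem symSet_compact_subgroup {d : ℕ}
    (p : MvPolynomial (Fin d) ℂ) (P : (Fin d → ℝ) → ℂ)
    (hP : ∀ ξ : Fin d → ℝ, P ξ = MvPolynomial.eval (fun i => (ξ i : ℂ)) p)
    (hnondeg : ∀ ξ : Fin d → ℝ, ξ ≠ 0 → P ξ ≠ 0)
    (F B : Matrix (Fin d) (Fin d) ℝ) (D : Fin d → ℝ)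
    (hB : IsUnit B) (hdiag : F = B * Matrix.diagonal D * B⁻¹)
    (hhom : ∀ t : ℝ, 0 < t → ∀ ξ : Fin d → ℝ,
      P ((NormedSpace.exp ((Real.log t) • F)).mulVec ξ) = (t : ℂ) * P ξ) :
    (∀ O ∈ SymSet P, IsUnit O) ∧
    IsCompact (SymSet P) ∧
    (1 : Matrix (Fin d) (Fin d) ℝ) ∈ SymSet P ∧
    (∀ O₁ O₂, O₁ ∈ SymSet P → O₂ ∈ SymSet P → O₁ * O₂ ∈ SymSet P) ∧
    (∀ O ∈ SymSet P, O⁻¹ ∈ SymSet P) := by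
  have hcont : Continuous P := by
    rw [show P = fun ξ => MvPolynomial.eval (fun i => (ξ i : ℂ)) p from funext hP]
    exact (MvPolynomial.continuous_eval p).comp (by fun_prop)
  have hP0 : P 0 = 0 := by
    have h := hhom 2 two_pos 0
    rw [mulVec_zero] at h
    push_cast at h
    linear_combination -h
  have hexp : ∀ u ξ, P ((B * diagonal (fun i => Real.exp (u * D i)) * B⁻¹) *ᵥ ξ) =
      Real.exp u * P ξ := fun u ξ => by
    simpa [hdiag, exp_smul_conj_diagonal hB] using hhom (Real.exp u) (Real.exp_pos u) ξ
  have hunit : ∀ O ∈ SymSet P, IsUnit O := fun _ => isUnit_of_mem_symSet hP0 hnondeg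
  exact ⟨hunit,
    isCompact_symSet hcont (isBounded_sublevel_of_conj_homogeneous hcont hnondeg hB hexp),
    one_mem_symSet P, fun _ _ => mul_mem_symSet, fun O hO => inv_mem_symSet hO (hunit O hO)⟩
end

section
/- Let P : W → ℂ be a nondegenerate-homogeneous polynomial on a finite-dimensional real vector space W, and let F₁, F₂ be two endomorphisms of W such that P(t^{Fᵢ}ξ) = t·P(ξ) for all t > 0, ξ ∈ W (i = 1, 2). Then trace(F₁) = trace(F₂). -/
/-!
For `F₁, F₂ ∈ Exp(P)` the matrix `exp F₁ * exp (-F₂)` preserves `P`, hence maps the sublevel set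
`K = {ξ | ‖P ξ‖ ≤ ε}` into itself. `K` contains a neighbourhood of `0` (as `P 0 = 0`), so if it is
also bounded, comparing volumes gives `det (exp F₁ * exp (-F₂)) = exp (tr F₁ - tr F₂) ≤ 1`, and
symmetrically.

Boundedness of `K` comes from the diagonalizable `F = B * diagonal D * B⁻¹ ∈ Exp(P)`: nondegeneracy
of `P` on the eigenvectors `B eᵢ` forces every `D i > 0`, so the flow `exp (s • F)` contracts every
point to `0` as `s → -∞`. Flowing a point of norm `≥ 1` back to the unit sphere, where `‖P‖` has
a positive minimum `m`, shows `‖P‖ ≥ m` outside the unit ball.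
-/

open NormedSpace Matrix Polynomial Filter Topology Set MeasureTheory Metric

theorem Real.eq_exp_mul_of_map_add_of_hasDerivAt {f : ℝ → ℝ} {c : ℝ}
    (hadd : ∀ s t, f (s + t) = f s * f t) (h0 : f 0 = 1) (hf : HasDerivAt f c 0) (t : ℝ) :
    f t = Real.exp (c * t) := by
  have hderiv (x : ℝ) : HasDerivAt f (f x * c) x := by
    have hshift : HasDerivAt (fun y => f x * f (y - x)) (f x * c) x :=
      ((sub_self x ▸ hf).comp_sub_const x x).const_mul (f x)
    refine hshift.congr_of_eventuallyEq (Eventually.of_forall fun y => ?_)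
    show f y = f x * f (y - x)
    rw [← hadd, add_sub_cancel]
  have hconst (x : ℝ) : HasDerivAt (fun y => f y * Real.exp (y * -c)) 0 x :=
    ((hderiv x).fun_mul (hasDerivAt_mul_const (-c)).exp).congr_deriv (by ring)
  have := is_const_of_deriv_eq_zero (fun x => (hconst x).differentiableAt)
    (fun x => (hconst x).deriv) t 0
  rwa [h0, zero_mul, Real.exp_zero, mul_one, show t * -c = -(c * t) by ring, Real.exp_neg,
    mul_inv_eq_one₀ (Real.exp_pos _).ne'] at this

theorem LinearMap.abs_det_le_one_of_mapsTo {E : Type*} [NormedAddCommGroup E]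
    [NormedSpace ℝ E] [MeasurableSpace E] [BorelSpace E] [FiniteDimensional ℝ E]
    (μ : Measure E) [μ.IsAddHaarMeasure] (f : E →ₗ[ℝ] E) {K : Set E} (h0 : μ K ≠ 0)
    (htop : μ K ≠ ⊤) (hf : MapsTo f K K) : |LinearMap.det f| ≤ 1 := by
  have h : ENNReal.ofReal |LinearMap.det f| * μ K ≤ 1 * μ K := by
    rw [← Measure.addHaar_image_linearMap, one_mul]
    exact measure_mono hf.image_subset
  rwa [ENNReal.mul_le_mul_iff_left h0 htop, ENNReal.ofReal_le_one] at h

/-- For `a ≤ 0` and `s ≥ 0` the points `exp (s * a) • v` stay on the segment `[0, v]`, where `f`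
is bounded, while `exp s * f v` is not. -/
theorem pos_of_apply_exp_mul_smul {E : Type*} [NormedAddCommGroup E] [NormedSpace ℝ E]
    {f : E → ℝ} (hf : Continuous f) {v : E} (hv : 0 < f v) {a : ℝ}
    (h : ∀ s, f (Real.exp (s * a) • v) = Real.exp s * f v) : 0 < a := by
  by_contra! ha
  obtain ⟨C, hC⟩ := (isCompact_Icc (a := (0 : ℝ)) (b := 1)).exists_bound_of_continuousOn
    (f := fun u => f (u • v)) (by fun_prop)
  obtain ⟨s, hCs, hs⟩ := ((Real.tendsto_exp_atTop.atTop_mul_const hv).eventually_gt_atTop C).and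
    (eventually_ge_atTop 0) |>.exists
  have hbound := hC (Real.exp (s * a))
    ⟨(Real.exp_pos _).le, Real.exp_le_one_iff.2 (mul_nonpos_of_nonneg_of_nonpos hs ha)⟩
  rw [h, Real.norm_eq_abs] at hbound
  linarith [le_abs_self (Real.exp s * f v)]

theorem exists_pos_le_of_one_le_norm {E : Type*} [NormedAddCommGroup E] [ProperSpace E]
    {f : E → ℝ} (hf : Continuous f) (hpos : ∀ x, x ≠ 0 → 0 < f x) (δ : ℝ → E → E)
    (hδf : ∀ s x, f (δ s x) = Real.exp s * f x) (hδ0 : ∀ x, δ 0 x = x)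
    (hδc : ∀ x, Continuous fun s => δ s x) (hδlim : ∀ x, Tendsto (fun s => δ s x) atBot (𝓝 0)) :
    ∃ ε > 0, ∀ x, 1 ≤ ‖x‖ → ε ≤ f x := by
  obtain ⟨ε, hε, hmin⟩ := (isCompact_sphere (0 : E) 1).exists_forall_le' hf.continuousOn
    fun x hx => hpos x (ne_zero_of_mem_sphere one_ne_zero ⟨x, hx⟩)
  refine ⟨ε, hε, fun x hx => ?_⟩
  obtain ⟨s, hs, hsx⟩ : ∃ s ∈ Iic (0 : ℝ), ‖δ s x‖ = 1 := by
    have hivt := isPreconnected_Iic.intermediate_value_Ioc (mem_Iic.2 le_rfl)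
      (le_principal_iff.2 (Iic_mem_atBot 0)) (f := fun s => ‖δ s x‖)
      (hδc x).norm.continuousOn (by simpa using (hδlim x).norm)
    exact hivt ⟨one_pos, by simpa [hδ0] using hx⟩
  calc ε ≤ f (δ s x) := hmin _ (mem_sphere_zero_iff_norm.2 hsx)
    _ = Real.exp s * f x := hδf s x
    _ ≤ f x := mul_le_of_le_one_left (hpos x (norm_pos_iff.1 (one_pos.trans_le hx))).le
        (Real.exp_le_one_iff.2 hs)

namespace Matrix

variable {ι : Type*} [Fintype ι] [DecidableEq ι]

theorem hasDerivAt_det_one_add_smul (M : Matrix ι ι ℝ) :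
    HasDerivAt (fun r : ℝ => (1 + r • M).det) M.trace 0 := by
  have h := (det (1 + (X : ℝ[X]) • M.map C)).hasDerivAt 0
  rw [derivative_det_one_add_X_smul] at h
  refine h.congr_of_eventuallyEq (Eventually.of_forall fun r => ?_)
  show _ = eval r _
  rw [eval_det]
  refine congrArg det ?_
  ext i j
  by_cases h : i = j <;> simp [h, mul_comm]

section LinftyOpNorm

attribute [local instance] Matrix.linftyOpNormedRing Matrix.linftyOpNormedAlgebra

theorem differentiable_det : Differentiable ℝ (fun A : Matrix ι ι ℝ => A.det) := by
  have hentry (i j : ι) : Differentiable ℝ (fun A : Matrix ι ι ℝ => A i j) :=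
    (entryLinearMap ℝ ℝ i j).toContinuousLinearMap.differentiable
  simp only [det_apply]
  fun_prop

/-- `exp (t • M)` and `1 + t • M` are tangent at `t = 0`, so the derivative of `det` along
either curve is the trace. -/
theorem hasDerivAt_det_exp_smul_zero (M : Matrix ι ι ℝ) :
    HasDerivAt (fun t : ℝ => (exp (t • M)).det) M.trace 0 := by
  have hdet := (differentiable_det (1 : Matrix ι ι ℝ)).hasFDerivAt
  have hline := ((hasDerivAt_id (0:ℝ)).smul_const M).const_add (1 : Matrix ι ι ℝ)
  rw [one_smul] at hline
  have hexp := hasDerivAt_exp_smul_const' (𝕂 := ℝ) M 0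
  rw [zero_smul, exp_zero, mul_one] at hexp
  have h₁ := hdet.comp_hasDerivAt_of_eq 0 hline (by simp)
  have h₂ := hdet.comp_hasDerivAt_of_eq 0 hexp (by simp)
  rwa [← h₁.unique (hasDerivAt_det_one_add_smul M)]

end LinftyOpNorm

theorem det_exp (M : Matrix ι ι ℝ) : (exp M).det = Real.exp M.trace := by
  have hadd (s t : ℝ) : (exp ((s + t) • M)).det = (exp (s • M)).det * (exp (t • M)).det := by
    rw [add_smul, exp_add_of_commute _ _ (((Commute.refl M).smul_left s).smul_right t), det_mul]
  simpa using Real.eq_exp_mul_of_map_add_of_hasDerivAt hadd (by simp)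
    (hasDerivAt_det_exp_smul_zero M) 1

section Diagonalizable

variable {B : Matrix ι ι ℝ} {D : ι → ℝ} (hB : IsUnit B)
include hB

theorem exp_smul_conj_diagonal (s : ℝ) :
    exp (s • (B * diagonal D * B⁻¹)) = B * diagonal (fun i => Real.exp (s * D i)) * B⁻¹ := by
  rw [← smul_mul_assoc, ← mul_smul_comm, ← diagonal_smul, exp_conj B _ hB, exp_diagonal]
  refine congrArg (fun v => B * diagonal v * B⁻¹) (funext fun i => ?_)
  simp [Real.exp_eq_exp_ℝ]

theorem exp_smul_conj_diagonal_mulVec (s : ℝ) (x : ι → ℝ) :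
    exp (s • (B * diagonal D * B⁻¹)) *ᵥ x =
      B *ᵥ fun i => Real.exp (s * D i) * (B⁻¹ *ᵥ x) i := by
  rw [exp_smul_conj_diagonal hB, ← mulVec_mulVec, ← mulVec_mulVec]
  congr 1
  ext i
  rw [mulVec_diagonal]

theorem exp_smul_conj_diagonal_mulVec_single (s : ℝ) (i : ι) :
    exp (s • (B * diagonal D * B⁻¹)) *ᵥ (B *ᵥ Pi.single i 1) =
      Real.exp (s * D i) • (B *ᵥ Pi.single i 1) := by
  rw [exp_smul_conj_diagonal_mulVec hB, mulVec_mulVec,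
    nonsing_inv_mul _ ((isUnit_iff_isUnit_det B).1 hB), one_mulVec, ← mulVec_smul]
  congr 1
  ext j
  by_cases hj : j = i <;> simp [hj]

theorem tendsto_exp_smul_conj_diagonal_mulVec_atBot (hD : ∀ i, 0 < D i)
    (x : ι → ℝ) : Tendsto (fun s : ℝ => exp (s • (B * diagonal D * B⁻¹)) *ᵥ x) atBot (𝓝 0) := by
  simp_rw [exp_smul_conj_diagonal_mulVec hB]
  have hcoord : Tendsto (fun s : ℝ => fun i => Real.exp (s * D i) * (B⁻¹ *ᵥ x) i) atBot (𝓝 0) :=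
    tendsto_pi_nhds.2 fun i => by
      simpa using (Real.tendsto_exp_atBot.comp
        (tendsto_id.atBot_mul_const (hD i))).mul_const ((B⁻¹ *ᵥ x) i)
  have hB0 : Tendsto (fun v => B *ᵥ v) (𝓝 0) (𝓝 0) := by
    simpa using (continuous_const.matrix_mulVec (A := fun _ => B) continuous_id).tendsto 0
  exact hB0.comp hcoord

end Diagonalizable

end Matrix

section Exponents

variable {ι : Type*} [Fintype ι] [DecidableEq ι] {P : (ι → ℝ) → ℂ}

/-- The set `Exp(P)` of the paper, reparametrized by `t = exp s`. -/
def exponents (P : (ι → ℝ) → ℂ) : Set (Matrix ι ι ℝ) :=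
  {F | ∀ (s : ℝ) (ξ : ι → ℝ), P (exp (s • F) *ᵥ ξ) = Real.exp s * P ξ}

theorem mem_exponents_of_log {F : Matrix ι ι ℝ}
    (h : ∀ t : ℝ, 0 < t → ∀ ξ, P (exp (Real.log t • F) *ᵥ ξ) = t * P ξ) : F ∈ exponents P :=
  fun s ξ => by simpa using h _ (Real.exp_pos s) ξ

theorem apply_zero_of_mem_exponents {F : Matrix ι ι ℝ} (hF : F ∈ exponents P) : P 0 = 0 := by
  have h := hF 1 0
  rw [mulVec_zero] at h
  by_contra hP0
  have h1 : Real.exp 1 = 1 := by exact_mod_cast (mul_eq_right₀ hP0).1 h.symm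
  exact one_ne_zero (Real.exp_eq_one_iff 1 |>.1 h1)

theorem norm_apply_exp_smul_mulVec {F : Matrix ι ι ℝ} (hF : F ∈ exponents P) (s : ℝ)
    (ξ : ι → ℝ) : ‖P (exp (s • F) *ᵥ ξ)‖ = Real.exp s * ‖P ξ‖ := by
  rw [hF, norm_mul, Complex.norm_real, Real.norm_of_nonneg (Real.exp_pos s).le]

theorem trace_le_of_mem_exponents {S : Set ℂ} (h0 : volume (P ⁻¹' S) ≠ 0)
    (htop : volume (P ⁻¹' S) ≠ ⊤) {F₁ F₂ : Matrix ι ι ℝ} (hF₁ : F₁ ∈ exponents P)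
    (hF₂ : F₂ ∈ exponents P) : F₁.trace ≤ F₂.trace := by
  have hG (ξ : ι → ℝ) : P ((exp F₁ * exp (-F₂)) *ᵥ ξ) = P ξ := by
    have h₁ := hF₁ 1 (exp ((-1 : ℝ) • F₂) *ᵥ ξ)
    rw [hF₂, one_smul, neg_one_smul, ← mul_assoc, ← Complex.ofReal_mul, ← Real.exp_add] at h₁
    simpa [mulVec_mulVec] using h₁
  have hdet := LinearMap.abs_det_le_one_of_mapsTo volume (toLin' (exp F₁ * exp (-F₂))) h0 htop
    fun ξ hξ => by simpa [hG] using hξ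
  rw [LinearMap.det_toLin', det_mul, det_exp, det_exp, trace_neg, ← Real.exp_add,
    abs_of_pos (Real.exp_pos _), Real.exp_le_one_iff] at hdet
  linarith

theorem exists_isBounded_preimage_closedBall (hP : Continuous P)
    (hnondeg : ∀ ξ, ξ ≠ 0 → P ξ ≠ 0) {B : Matrix ι ι ℝ} (hB : IsUnit B) {D : ι → ℝ}
    (hF : B * diagonal D * B⁻¹ ∈ exponents P) :
    ∃ ε > 0, Bornology.IsBounded (P ⁻¹' closedBall 0 ε) := by
  have hpos (ξ : ι → ℝ) (hξ : ξ ≠ 0) : 0 < ‖P ξ‖ := norm_pos_iff.2 (hnondeg ξ hξ)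
  have hD (i : ι) : 0 < D i := by
    refine pos_of_apply_exp_mul_smul (f := fun ξ => ‖P ξ‖) (v := B *ᵥ Pi.single i 1)
      (by fun_prop) (hpos _ ?_) fun s => ?_
    · exact (mulVec_injective_iff_isUnit.2 hB).ne_iff' (mulVec_zero B) |>.2
        (Pi.single_ne_zero_iff.2 one_ne_zero)
    · rw [← exp_smul_conj_diagonal_mulVec_single hB, norm_apply_exp_smul_mulVec hF]
  obtain ⟨ε, hε, hcoer⟩ := exists_pos_le_of_one_le_norm (f := fun ξ => ‖P ξ‖) (by fun_prop) hpos
    (fun s ξ => exp (s • (B * diagonal D * B⁻¹)) *ᵥ ξ) (norm_apply_exp_smul_mulVec hF)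
    (by simp) (fun ξ => by simp_rw [exp_smul_conj_diagonal_mulVec hB]; fun_prop)
    (tendsto_exp_smul_conj_diagonal_mulVec_atBot hB hD)
  refine ⟨ε / 2, half_pos hε, (isBounded_ball (x := (0 : ι → ℝ)) (r := 1)).subset fun ξ hξ => ?_⟩
  by_contra hξ'
  simp only [mem_preimage, mem_closedBall, dist_zero_right, mem_ball, not_lt] at hξ hξ'
  linarith [hcoer ξ hξ']

end Exponents

/-- For a nondegenerate-homogeneous polynomial P, any two members of Exp(P) have the same
trace. -/
theorem trace_eq_of_mem_exp {d : ℕ}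
    (p : MvPolynomial (Fin d) ℂ) (P : (Fin d → ℝ) → ℂ)
    (hP : ∀ ξ : Fin d → ℝ, P ξ = MvPolynomial.eval (fun i => (ξ i : ℂ)) p)
    (hnondeg : ∀ ξ : Fin d → ℝ, ξ ≠ 0 → P ξ ≠ 0)
    -- Exp(P) contains a diagonalizable endomorphism:
    (F B : Matrix (Fin d) (Fin d) ℝ) (D : Fin d → ℝ)
    (hB : IsUnit B) (hdiag : F = B * Matrix.diagonal D * B⁻¹)
    (hFhom : ∀ t : ℝ, 0 < t → ∀ ξ : Fin d → ℝ,
      P ((NormedSpace.exp ((Real.log t) • F)).mulVec ξ) = (t : ℂ) * P ξ)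
    -- F₁, F₂ ∈ Exp(P):
    (F₁ F₂ : Matrix (Fin d) (Fin d) ℝ)
    (hF₁ : ∀ t : ℝ, 0 < t → ∀ ξ : Fin d → ℝ,
      P ((NormedSpace.exp ((Real.log t) • F₁)).mulVec ξ) = (t : ℂ) * P ξ)
    (hF₂ : ∀ t : ℝ, 0 < t → ∀ ξ : Fin d → ℝ,
      P ((NormedSpace.exp ((Real.log t) • F₂)).mulVec ξ) = (t : ℂ) * P ξ) :
    F₁.trace = F₂.trace := by
  have hPc : Continuous P := funext hP ▸ (MvPolynomial.continuous_eval p).comp (by fun_prop)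
  have hF : F ∈ exponents P := mem_exponents_of_log hFhom
  subst hdiag
  obtain ⟨ε, hε, hbdd⟩ := exists_isBounded_preimage_closedBall hPc hnondeg hB hF
  have h0 : volume (P ⁻¹' closedBall 0 ε) ≠ 0 := by
    refine (Measure.measure_pos_of_mem_nhds volume (x := 0) ?_).ne'
    refine hPc.continuousAt.preimage_mem_nhds ?_
    rw [apply_zero_of_mem_exponents hF]
    exact closedBall_mem_nhds 0 hε
  have htop := (hbdd.measure_lt_top (μ := volume)).ne
  have hF₁' := mem_exponents_of_log hF₁
  have hF₂' := mem_exponents_of_log hF₂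
  exact le_antisymm (trace_le_of_mem_exponents h0 htop hF₁' hF₂')
    (trace_le_of_mem_exponents h0 htop hF₂' hF₁')
end

section
/- Let P be a positive-homogeneous polynomial on a d-dimensional real vector space W, expressed with respect to a diagonalizing basis as P(ξ) = Σ_{|β:n|=1} a_β ξ^β where n = (n₁,…,n_d) ∈ ℕ₊^d. Then each nₖ is even, i.e., n = 2m for some m ∈ ℕ₊^d, and moreover Re(a_{nₖeₖ}) > 0 for each k = 1,…,d. -/
/-!
Restricted to the `k`-th axis, the only monomial of weighted degree one that survives is
`ξₖ ^ nₖ`, so `Re P (t eₖ) = Re a_{nₖeₖ} · t ^ nₖ`. Definiteness at `t = 1` makes this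
coefficient positive, and nonnegativity at `t = -1` then forces `nₖ` to be even.
-/

section AxisRestriction

variable {ι : Type*} [Fintype ι] [DecidableEq ι]

lemma prod_single_pow_eq_zero {R : Type*} [CommMonoidWithZero R] {β : ι → ℕ} {j k : ι}
    (hjk : j ≠ k) (hβj : β j ≠ 0) (t : R) : ∏ i, (Pi.single k t : ι → R) i ^ β i = 0 :=
  Finset.prod_eq_zero (Finset.mem_univ j) (by simp [hjk, hβj])

lemma prod_single_pow_single {R : Type*} [CommMonoidWithZero R] (k : ι) (t : R) (m : ℕ) :
    ∏ i, (Pi.single k t : ι → R) i ^ (Pi.single k m : ι → ℕ) i = t ^ m := by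
  rw [Fintype.prod_eq_single k fun i hik => by simp [hik]]
  simp

lemma eq_single_of_weight_eq_one {n β : ι → ℕ} {k : ι} (hβ : ∑ j, (β j : ℚ) / n j = 1)
    (hsupp : ∀ j ≠ k, β j = 0) : β = Pi.single k (n k) := by
  rw [Fintype.sum_eq_single k fun j hjk => by simp [hsupp j hjk]] at hβ
  have hβk : β k = n k := by exact_mod_cast eq_of_div_eq_one hβ
  ext j
  by_cases hjk : j = k
  · subst hjk; simp [hβk]
  · simp [hjk, hsupp j hjk]

lemma sum_monomial_single {R : Type*} [CommSemiring R] {n : ι → ℕ} {S : Finset (ι → ℕ)}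
    {a : (ι → ℕ) → R} (hS : ∀ β ∈ S, ∑ j, (β j : ℚ) / n j = 1) (haS : ∀ β ∉ S, a β = 0)
    (k : ι) (t : R) :
    ∑ β ∈ S, a β * ∏ j, (Pi.single k t : ι → R) j ^ β j = a (Pi.single k (n k)) * t ^ n k := by
  rw [Finset.sum_eq_single (Pi.single k (n k)), prod_single_pow_single]
  · intro β hβ hne
    obtain ⟨j, hjk, hβj⟩ : ∃ j ≠ k, β j ≠ 0 := by
      by_contra! hsupp
      exact hne (eq_single_of_weight_eq_one (hS β hβ) hsupp)
    rw [prod_single_pow_eq_zero hjk hβj, mul_zero]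
  · intro hnot
    rw [haS _ hnot, zero_mul]

end AxisRestriction

lemma pos_and_even_of_forall_mul_pow_nonneg {c : ℝ} {m : ℕ} (h : ∀ t : ℝ, 0 ≤ c * t ^ m)
    (hc : c ≠ 0) : 0 < c ∧ Even m := by
  have hc_pos : 0 < c := lt_of_le_of_ne (by simpa using h 1) hc.symm
  refine ⟨hc_pos, Nat.not_odd_iff_even.mp fun hodd => ?_⟩
  have := h (-1)
  rw [hodd.neg_one_pow] at this
  linarith

theorem positive_homogeneous_even_weights_general {d : ℕ}
    (n : Fin d → ℕ)
    (S : Finset (Fin d → ℕ)) (a : (Fin d → ℕ) → ℂ)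
    (hS : ∀ β ∈ S, (∑ j, (β j : ℚ) / (n j : ℚ)) = 1)
    (haS : ∀ β ∉ S, a β = 0)
    (P : (Fin d → ℝ) → ℂ)
    (hP : ∀ ξ : Fin d → ℝ, P ξ = ∑ β ∈ S, a β * ∏ j, (ξ j : ℂ) ^ (β j))
    (hpos : ∀ ξ : Fin d → ℝ, 0 ≤ (P ξ).re)
    (hdef : ∀ ξ : Fin d → ℝ, (P ξ).re = 0 → ξ = 0) :
    (∀ k : Fin d, Even (n k)) ∧
    (∀ k : Fin d, 0 < (a (fun j => if j = k then n k else 0)).re) := by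
  have haxis : ∀ k (t : ℝ), (P (Pi.single k t)).re = (a (Pi.single k (n k))).re * t ^ n k := by
    intro k t
    have hcast : ∀ j, ((Pi.single k t : Fin d → ℝ) j : ℂ) = (Pi.single k (t : ℂ) : Fin d → ℂ) j :=
      Pi.apply_single (fun _ => Complex.ofReal) (fun _ => Complex.ofReal_zero) k t
    simp only [hP, hcast]
    rw [sum_monomial_single hS haS, ← Complex.ofReal_pow, Complex.re_mul_ofReal]
  have hcoeff : ∀ k, 0 < (a (Pi.single k (n k))).re ∧ Even (n k) := by
    intro k
    refine pos_and_even_of_forall_mul_pow_nonneg (fun t => haxis k t ▸ hpos _) fun h0 => ?_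
    have := hdef (Pi.single k 1) (by rw [haxis, h0, zero_mul])
    exact one_ne_zero (Pi.single_eq_zero_iff.mp this)
  have hsingle : ∀ k, (fun j => if j = k then n k else 0) = Pi.single k (n k) :=
    fun k => funext fun j => (Pi.single_apply k (n k) j).symm
  exact ⟨fun k => (hcoeff k).2, fun k => hsingle k ▸ (hcoeff k).1⟩

/-- If a polynomial P(ξ) = Σ_{|β:n|=1} a_β ξ^β is positive-definite (Re P ≥ 0 vanishing only
at 0), then each weight nₖ is even and the axis coefficients have positive real part. -/
theorem positive_homogeneous_even_weights {d : ℕ}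
    (n : Fin d → ℕ) (hn : ∀ i, 0 < n i)
    (S : Finset (Fin d → ℕ)) (a : (Fin d → ℕ) → ℂ)
    (hS : ∀ β ∈ S, (∑ j, (β j : ℚ) / (n j : ℚ)) = 1)
    (haS : ∀ β ∉ S, a β = 0)
    (P : (Fin d → ℝ) → ℂ)
    (hP : ∀ ξ : Fin d → ℝ, P ξ = ∑ β ∈ S, a β * ∏ j, (ξ j : ℂ) ^ (β j))
    (hpos : ∀ ξ : Fin d → ℝ, 0 ≤ (P ξ).re)
    (hdef : ∀ ξ : Fin d → ℝ, (P ξ).re = 0 → ξ = 0) :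
    (∀ k : Fin d, Even (n k)) ∧
    (∀ k : Fin d, 0 < (a (fun j => if j = k then n k else 0)).re) :=
  positive_homogeneous_even_weights_general n S a hS haS P hP hpos hdef
end

section
/- Let R : ℝ^d → ℝ be continuous, positive-definite, and homogeneous with respect to {t^E} for a diagonalizable E with all eigenvalues in (0,1). Then the Legendre–Fenchel transform R^# grows superlinearly: for any norm |·| on ℝ^d, |x|/R^#(x) → 0 as |x| → ∞. -/
/-!
Continuity bounds `R` by a constant `C_M` on the ball of radius `|M|`. For every `x` that ball
contains a multiple `ξ` of a basis vector with `⟨ξ, x⟩ = M ‖x‖`, so testing the supremum defining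
`R^#` at `ξ` gives `R^#(x) ≥ M ‖x‖ - C_M`. As `M` is arbitrary, `R^#(x) / ‖x‖ → ∞`.
-/

open Matrix Filter

theorem exists_norm_le_dotProduct_eq_mul_norm {ι : Type*} [Fintype ι] [DecidableEq ι]
    (x : ι → ℝ) (M : ℝ) : ∃ ξ : ι → ℝ, ‖ξ‖ ≤ |M| ∧ ξ ⬝ᵥ x = M * ‖x‖ := by
  rcases eq_or_ne x 0 with rfl | hx
  · exact ⟨0, by simp⟩
  have : Nonempty ι := ⟨(Function.ne_iff.1 hx).choose⟩
  obtain ⟨i, hi⟩ := Finite.exists_max fun j => |x j|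
  have hnorm : ‖x‖ = |x i| :=
    le_antisymm ((pi_norm_le_iff_of_nonneg (abs_nonneg _)).2 hi) (norm_le_pi_norm x i)
  refine ⟨Pi.single i (M * SignType.sign (x i)), ?_, ?_⟩
  · rw [Pi.norm_single, norm_mul, Real.norm_eq_abs M]
    exact mul_le_of_le_one_right (abs_nonneg M) (by cases SignType.sign (x i) <;> simp)
  · rw [single_dotProduct, mul_assoc, sign_mul_self, hnorm]

theorem tendsto_div_norm_atTop_of_forall_le {E : Type*} [SeminormedAddCommGroup E] {f : E → ℝ}
    (hf : ∀ M, ∃ C, ∀ x, M * ‖x‖ - C ≤ f x) :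
    Tendsto (fun x => f x / ‖x‖) (Bornology.cobounded E) atTop := by
  refine tendsto_atTop.2 fun M => ?_
  obtain ⟨C, hC⟩ := hf (M + 1)
  filter_upwards [tendsto_norm_cobounded_atTop.eventually_ge_atTop (max C 1)] with x hx
  have hpos : 0 < ‖x‖ := lt_of_lt_of_le one_pos (le_of_max_le_right hx)
  rw [le_div_iff₀ hpos]
  nlinarith [hC x, le_of_max_le_left hx]

theorem exists_mul_norm_sub_le_of_isLUB_conjugate {ι : Type*} [Fintype ι] [DecidableEq ι]
    {R Rs : (ι → ℝ) → ℝ} (hcont : Continuous R)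
    (hRs : ∀ x, IsLUB {y : ℝ | ∃ ξ, y = ξ ⬝ᵥ x - R ξ} (Rs x)) (M : ℝ) :
    ∃ C, ∀ x, M * ‖x‖ - C ≤ Rs x := by
  obtain ⟨C, hC⟩ := (isCompact_closedBall 0 |M|).bddAbove_image hcont.continuousOn
  refine ⟨C, fun x => ?_⟩
  obtain ⟨ξ, hξ, hdot⟩ := exists_norm_le_dotProduct_eq_mul_norm x M
  have hRξ : R ξ ≤ C := hC ⟨ξ, mem_closedBall_zero_iff.2 hξ, rfl⟩
  have hconj : ξ ⬝ᵥ x - R ξ ≤ Rs x := (hRs x).1 ⟨ξ, rfl⟩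
  linarith

theorem legendre_fenchel_superlinear_general {d : ℕ}
    (R : (Fin d → ℝ) → ℝ) (hcont : Continuous R)
    (Rs : (Fin d → ℝ) → ℝ)
    (hRs : ∀ x : Fin d → ℝ, IsLUB {y : ℝ | ∃ ξ : Fin d → ℝ, y = ξ ⬝ᵥ x - R ξ} (Rs x)) :
    Tendsto (fun x : Fin d → ℝ => ‖x‖ / Rs x) (Bornology.cobounded (Fin d → ℝ)) (nhds 0) := by
  have hratio := tendsto_div_norm_atTop_of_forall_le
    (exists_mul_norm_sub_le_of_isLUB_conjugate hcont hRs)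
  simpa only [Pi.inv_def, inv_div] using hratio.inv_tendsto_atTop

/-- The Legendre–Fenchel transform of a continuous positive-definite function homogeneous
with respect to {t^E}, E diagonalizable with eigenvalues in (0,1), grows superlinearly. -/
theorem legendre_fenchel_superlinear {d : ℕ}
    (R : (Fin d → ℝ) → ℝ) (hcont : Continuous R)
    (hnonneg : ∀ ξ, 0 ≤ R ξ) (hdef : ∀ ξ : Fin d → ℝ, R ξ = 0 ↔ ξ = 0)
    (E B : Matrix (Fin d) (Fin d) ℝ) (D : Fin d → ℝ)
    (hB : IsUnit B) (hD : ∀ i, D i ∈ Set.Ioo (0:ℝ) 1)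
    (hdiag : E = B * Matrix.diagonal D * B⁻¹)
    (hhom : ∀ t : ℝ, 0 < t → ∀ ξ : Fin d → ℝ,
      R ((NormedSpace.exp ((Real.log t) • E)).mulVec ξ) = t * R ξ)
    (Rs : (Fin d → ℝ) → ℝ)
    (hRs : ∀ x : Fin d → ℝ, IsLUB {y : ℝ | ∃ ξ : Fin d → ℝ, y = ξ ⬝ᵥ x - R ξ} (Rs x)) :
    Tendsto (fun x : Fin d → ℝ => ‖x‖ / Rs x) (Bornology.cobounded (Fin d → ℝ)) (nhds 0) :=
  legendre_fenchel_superlinear_general R hcont Rs hRs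
end

section
/- Let m = (m₁,…,m_d) ∈ ℕ₊^d and define ω = (2m₁/(2m₁−1), …, 2m_d/(2m_d−1)) and the anisotropic homogeneous norm |x|^ω = Σₖ |xₖ|^{ωₖ}. Let R^# be the Legendre–Fenchel transform of a positive-definite continuous R on (ℝ^d)* homogeneous with respect to {t^{E*}} where E eₖ = eₖ/(2mₖ). Then R^# and |·|^ω are comparable: there exists C > 0 with C⁻¹|x|^ω ≤ R^#(x) ≤ C|x|^ω for all x ∈ ℝ^d. -/
/-!
Put `α k = 2 m k` and `anisoNorm α ξ = ∑ₖ |ξₖ|^{αₖ}`. Both `R` and `anisoNorm α` are homogeneous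
of degree one for the dilations `ξₖ ↦ t^{1/αₖ} ξₖ`, so comparing them on the compact sphere
`anisoNorm α η = 1` gives `c · anisoNorm α ≤ R ≤ C · anisoNorm α`. The Legendre–Fenchel transform
reverses these inequalities, and the transform of `b · anisoNorm α` splits over coordinates into
`sup_u (u a - b |u|^α)`, which the substitution `u = v a^{1/(α-1)}` shows to be a constant multiple
of `a^{α/(α-1)}`.
-/

open Filter Topology

section Legendre1D

variable {α b : ℝ}

lemma rescale_sub_mul_rpow (hα : 1 < α) {a v : ℝ} (ha : 0 ≤ a) (hv : 0 ≤ v) :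
    v * a ^ (α - 1)⁻¹ * a - b * (v * a ^ (α - 1)⁻¹) ^ α =
      (v - b * v ^ α) * a ^ α.conjExponent := by
  have hs : α - 1 ≠ 0 := by linarith
  have h1 : a ^ (α - 1)⁻¹ * a = a ^ α.conjExponent := by
    rw [← Real.rpow_add_one' ha (by positivity), Real.conjExponent]
    congr 1
    field_simp
    ring
  have h2 : (a ^ (α - 1)⁻¹) ^ α = a ^ α.conjExponent := by
    rw [← Real.rpow_mul ha, Real.conjExponent, inv_mul_eq_div]
  rw [Real.mul_rpow hv (by positivity), h2, mul_assoc, h1]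
  ring

lemma sub_mul_rpow_le (hb : 0 < b) (hα : 1 < α) {v : ℝ} (hv : 0 ≤ v) :
    v - b * v ^ α ≤ b⁻¹ ^ (α - 1)⁻¹ := by
  rcases le_or_gt v (b⁻¹ ^ (α - 1)⁻¹) with hle | hlt
  · have : 0 ≤ b * v ^ α := by positivity
    linarith
  · have hpow : b⁻¹ < v ^ (α - 1) := by
      simpa [Real.rpow_inv_rpow (inv_nonneg.2 hb.le) (sub_ne_zero.2 hα.ne')] using
        Real.rpow_lt_rpow (by positivity) hlt (sub_pos.2 hα)
    have hvα : v ^ α = v ^ (α - 1) * v := by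
      rw [← Real.rpow_add_one' hv (by linarith)]; ring_nf
    have : v < b * v ^ α := by
      rw [hvα, ← mul_assoc]
      have hv' : 0 < v := (Real.rpow_nonneg (inv_nonneg.2 hb.le) _).trans_lt hlt
      nlinarith [(inv_lt_iff_one_lt_mul₀' hb).1 hpow]
    have : 0 ≤ b⁻¹ ^ (α - 1)⁻¹ := by positivity
    linarith

lemma sub_mul_rpow_eq_half (hb : 0 < b) (hα : 1 < α) :
    (2 * b)⁻¹ ^ (α - 1)⁻¹ - b * ((2 * b)⁻¹ ^ (α - 1)⁻¹) ^ α =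
      (2 * b)⁻¹ ^ (α - 1)⁻¹ / 2 := by
  set l := (2 * b)⁻¹ ^ (α - 1)⁻¹
  have hl : 0 ≤ l := by positivity
  have hlα : l ^ α = l ^ (α - 1) * l := by
    rw [← Real.rpow_add_one' hl (by linarith)]; ring_nf
  have : l ^ (α - 1) = (2 * b)⁻¹ :=
    Real.rpow_inv_rpow (by positivity) (sub_ne_zero.2 hα.ne')
  rw [hlα, this]
  field_simp
  ring

lemma mul_sub_mul_abs_rpow_le (hb : 0 < b) (hα : 1 < α) (u a : ℝ) :
    u * a - b * |u| ^ α ≤ b⁻¹ ^ (α - 1)⁻¹ * |a| ^ α.conjExponent := by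
  have hua : u * a ≤ |u| * |a| := by rw [← abs_mul]; exact le_abs_self _
  rcases (abs_nonneg a).eq_or_lt' with ha | ha
  · rw [ha, Real.zero_rpow (Real.HolderConjugate.conjExponent hα).right_pos.ne']
    rw [ha, mul_zero] at hua
    have : 0 ≤ b * |u| ^ α := by positivity
    linarith
  · set v := |u| / |a| ^ (α - 1)⁻¹
    have hu : |u| = v * |a| ^ (α - 1)⁻¹ := by
      rw [div_mul_cancel₀]; positivity
    calc u * a - b * |u| ^ α ≤ |u| * |a| - b * |u| ^ α := by linarith
      _ = (v - b * v ^ α) * |a| ^ α.conjExponent := by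
        rw [hu]; exact rescale_sub_mul_rpow hα ha.le (by positivity)
      _ ≤ b⁻¹ ^ (α - 1)⁻¹ * |a| ^ α.conjExponent := by
        gcongr
        exact sub_mul_rpow_le hb hα (by positivity)

lemma exists_mul_sub_mul_abs_rpow_ge (hb : 0 < b) (hα : 1 < α) (a : ℝ) :
    ∃ u, (2 * b)⁻¹ ^ (α - 1)⁻¹ / 2 * |a| ^ α.conjExponent ≤ u * a - b * |u| ^ α := by
  set l := (2 * b)⁻¹ ^ (α - 1)⁻¹
  have of_nonneg : ∀ a, 0 ≤ a →
      l / 2 * a ^ α.conjExponent ≤ l * a ^ (α - 1)⁻¹ * a - b * |l * a ^ (α - 1)⁻¹| ^ α := by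
    intro a ha
    rw [abs_of_nonneg (by positivity), rescale_sub_mul_rpow hα ha (by positivity),
      sub_mul_rpow_eq_half hb hα]
  rcases le_total 0 a with ha | ha
  · exact ⟨l * a ^ (α - 1)⁻¹, by rw [abs_of_nonneg ha]; exact of_nonneg a ha⟩
  · refine ⟨-(l * (-a) ^ (α - 1)⁻¹), ?_⟩
    have := of_nonneg (-a) (by linarith)
    rw [abs_of_nonpos ha]
    rwa [abs_neg, neg_mul_comm]

end Legendre1D

noncomputable section Anisotropic

variable {ι : Type*} {α : ι → ℝ}

def anisoDilation (α : ι → ℝ) (t : ℝ) (ξ : ι → ℝ) : ι → ℝ := fun k => t ^ (1 / α k) * ξ k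

def IsAnisoHomogeneous (α : ι → ℝ) (f : (ι → ℝ) → ℝ) : Prop :=
  ∀ t : ℝ, 0 < t → ∀ ξ, f (anisoDilation α t ξ) = t * f ξ

lemma anisoDilation_anisoDilation {s t : ℝ} (hs : 0 ≤ s) (ht : 0 ≤ t) (ξ : ι → ℝ) :
    anisoDilation α s (anisoDilation α t ξ) = anisoDilation α (s * t) ξ := by
  ext k
  simp only [anisoDilation, Real.mul_rpow hs ht, mul_assoc]

lemma anisoDilation_one (ξ : ι → ℝ) : anisoDilation α 1 ξ = ξ := by
  ext k
  simp [anisoDilation]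

lemma IsAnisoHomogeneous.map_zero {f : (ι → ℝ) → ℝ} (hf : IsAnisoHomogeneous α f) : f 0 = 0 := by
  have h := hf 2 two_pos 0
  have h0 : anisoDilation α 2 (0 : ι → ℝ) = 0 := by ext k; simp [anisoDilation]
  rw [h0] at h
  linarith

variable [Fintype ι]

def anisoNorm (α : ι → ℝ) (x : ι → ℝ) : ℝ := ∑ k, |x k| ^ α k

lemma anisoNorm_nonneg (x : ι → ℝ) : 0 ≤ anisoNorm α x :=
  Finset.sum_nonneg fun k _ => by positivity

lemma anisoNorm_pos {x : ι → ℝ} (hx : x ≠ 0) : 0 < anisoNorm α x := by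
  obtain ⟨k, hk⟩ := Function.ne_iff.1 hx
  calc 0 < |x k| ^ α k := Real.rpow_pos_of_pos (abs_pos.2 hk) _
    _ ≤ anisoNorm α x :=
      Finset.single_le_sum (f := fun k => |x k| ^ α k) (fun k _ => by positivity)
        (Finset.mem_univ k)

lemma anisoNorm_zero (hα : ∀ k, α k ≠ 0) : anisoNorm α (0 : ι → ℝ) = 0 := by
  simp [anisoNorm, Real.zero_rpow (hα _)]

lemma continuous_anisoNorm (hα : ∀ k, 0 ≤ α k) : Continuous (anisoNorm α) :=
  continuous_finsetSum _ fun k _ =>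
    (continuous_apply k).abs.rpow_const fun _ => Or.inr (hα k)

lemma isAnisoHomogeneous_anisoNorm (hα : ∀ k, α k ≠ 0) :
    IsAnisoHomogeneous α (anisoNorm (ι := ι) α) := by
  intro t ht ξ
  simp only [anisoNorm, anisoDilation, Finset.mul_sum]
  refine Finset.sum_congr rfl fun k _ => ?_
  rw [abs_mul, abs_of_pos (by positivity), Real.mul_rpow (by positivity) (abs_nonneg _),
    ← Real.rpow_mul ht.le, one_div_mul_cancel (hα k), Real.rpow_one]

lemma IsAnisoHomogeneous.exists_anisoNorm_eq_one_eq_mul {f : (ι → ℝ) → ℝ}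
    (hf : IsAnisoHomogeneous α f) (hα : ∀ k, α k ≠ 0) {ξ : ι → ℝ} (hξ : ξ ≠ 0) :
    ∃ η, anisoNorm α η = 1 ∧ f ξ = anisoNorm α ξ * f η := by
  set t := anisoNorm α ξ
  have ht : 0 < t := anisoNorm_pos hξ
  refine ⟨anisoDilation α t⁻¹ ξ, ?_, ?_⟩
  · rw [isAnisoHomogeneous_anisoNorm hα _ (inv_pos.2 ht), inv_mul_cancel₀ ht.ne']
  · rw [← hf t ht, anisoDilation_anisoDilation ht.le (inv_nonneg.2 ht.le),
      mul_inv_cancel₀ ht.ne', anisoDilation_one]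

lemma isCompact_anisoNorm_eq_one (hα : ∀ k, 0 < α k) :
    IsCompact {η : ι → ℝ | anisoNorm α η = 1} := by
  refine Metric.isCompact_of_isClosed_isBounded
    (isClosed_eq (continuous_anisoNorm fun k => (hα k).le) continuous_const)
    (Metric.isBounded_closedBall (x := 0) (r := 1) |>.subset fun η hη => ?_)
  rw [Metric.mem_closedBall, dist_zero_right, pi_norm_le_iff_of_nonneg zero_le_one]
  intro k
  by_contra! hk
  have h1 : 1 < |η k| ^ α k := Real.one_lt_rpow hk (hα k)
  have h2 : |η k| ^ α k ≤ anisoNorm α η :=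
    Finset.single_le_sum (f := fun k => |η k| ^ α k) (fun k _ => by positivity)
      (Finset.mem_univ k)
  rw [hη] at h2
  linarith

namespace IsAnisoHomogeneous

variable {f : (ι → ℝ) → ℝ}

lemma exists_pos_mul_anisoNorm_le (hf : IsAnisoHomogeneous α f) (hα : ∀ k, 0 < α k)
    (hcont : Continuous f) (hpos : ∀ ξ, ξ ≠ 0 → 0 < f ξ) :
    ∃ c, 0 < c ∧ ∀ ξ, c * anisoNorm α ξ ≤ f ξ := by
  have hα' : ∀ k, α k ≠ 0 := fun k => (hα k).ne'
  obtain ⟨c, hc, hcS⟩ := (isCompact_anisoNorm_eq_one hα).exists_forall_le'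
    hcont.continuousOn fun η (hη : anisoNorm α η = 1) =>
      hpos η fun h => by rw [h, anisoNorm_zero hα'] at hη; exact zero_ne_one hη
  refine ⟨c, hc, fun ξ => ?_⟩
  rcases eq_or_ne ξ 0 with rfl | hξ
  · rw [anisoNorm_zero hα', hf.map_zero, mul_zero]
  · obtain ⟨η, hη, hfξ⟩ := hf.exists_anisoNorm_eq_one_eq_mul hα' hξ
    rw [hfξ, mul_comm]
    exact mul_le_mul_of_nonneg_left (hcS η hη) (anisoNorm_nonneg ξ)

lemma eventually_le_mul_anisoNorm (hf : IsAnisoHomogeneous α f) (hα : ∀ k, 0 < α k)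
    (hcont : Continuous f) :
    ∀ᶠ C in atTop, ∀ ξ, f ξ ≤ C * anisoNorm α ξ := by
  have hα' : ∀ k, α k ≠ 0 := fun k => (hα k).ne'
  obtain ⟨C₀, hC₀⟩ := (isCompact_anisoNorm_eq_one hα).bddAbove_image hcont.continuousOn
  filter_upwards [eventually_ge_atTop C₀] with C hC ξ
  rcases eq_or_ne ξ 0 with rfl | hξ
  · rw [anisoNorm_zero hα', hf.map_zero, mul_zero]
  · obtain ⟨η, hη, hfξ⟩ := hf.exists_anisoNorm_eq_one_eq_mul hα' hξ
    rw [hfξ, mul_comm]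
    exact mul_le_mul_of_nonneg_right ((hC₀ ⟨η, hη, rfl⟩).trans hC) (anisoNorm_nonneg ξ)

end IsAnisoHomogeneous

variable {b : ℝ}

lemma eventually_dotProduct_sub_mul_anisoNorm_le (hb : 0 < b) (hα : ∀ k, 1 < α k) :
    ∀ᶠ K in atTop, ∀ ξ x : ι → ℝ,
      ξ ⬝ᵥ x - b * anisoNorm α ξ ≤ K * anisoNorm (fun k => (α k).conjExponent) x := by
  have h1 : ∀ k, ∀ᶠ K in atTop, ∀ u a : ℝ,
      u * a - b * |u| ^ α k ≤ K * |a| ^ (α k).conjExponent := fun k => by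
    filter_upwards [eventually_ge_atTop (b⁻¹ ^ (α k - 1)⁻¹)] with K hK u a
    exact (mul_sub_mul_abs_rpow_le hb (hα k) u a).trans (by gcongr)
  filter_upwards [eventually_all.2 h1] with K hK ξ x
  simp only [dotProduct, anisoNorm, Finset.mul_sum, ← Finset.sum_sub_distrib]
  exact Finset.sum_le_sum fun k _ => hK k (ξ k) (x k)

lemma eventually_exists_mul_anisoNorm_le_dotProduct_sub (hb : 0 < b) (hα : ∀ k, 1 < α k) :
    ∀ᶠ κ in 𝓝[>] 0, ∀ x : ι → ℝ, ∃ ξ,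
      κ * anisoNorm (fun k => (α k).conjExponent) x ≤ ξ ⬝ᵥ x - b * anisoNorm α ξ := by
  have h1 : ∀ k, ∀ᶠ κ in 𝓝[>] 0, ∀ a : ℝ, ∃ u,
      κ * |a| ^ (α k).conjExponent ≤ u * a - b * |u| ^ α k := fun k => by
    have hl : 0 < (2 * b)⁻¹ ^ (α k - 1)⁻¹ / 2 := by positivity
    filter_upwards [(eventually_lt_nhds hl).filter_mono nhdsWithin_le_nhds] with κ hκ a
    obtain ⟨u, hu⟩ := exists_mul_sub_mul_abs_rpow_ge hb (hα k) a
    exact ⟨u, le_trans (by gcongr) hu⟩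
  filter_upwards [eventually_all.2 h1] with κ hκ x
  choose ξ hξ using hκ
  refine ⟨fun k => ξ k (x k), ?_⟩
  simp only [dotProduct, anisoNorm, Finset.mul_sum, ← Finset.sum_sub_distrib]
  exact Finset.sum_le_sum fun k _ => hξ k (x k)

end Anisotropic

/-- The Legendre–Fenchel transform R^# of a positive-definite continuous R, homogeneous with
respect to the diagonal group (t^E ξ)ₖ = t^{1/(2mₖ)} ξₖ, is comparable to the anisotropic
homogeneous norm |x|^ω = Σₖ |xₖ|^{2mₖ/(2mₖ−1)}. -/
theorem legendre_fenchel_comparable_homogeneous_norm {d : ℕ}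
    (m : Fin d → ℕ) (hm : ∀ k, 0 < m k)
    (R : (Fin d → ℝ) → ℝ) (hcont : Continuous R)
    (hnonneg : ∀ ξ, 0 ≤ R ξ) (hdef : ∀ ξ : Fin d → ℝ, R ξ = 0 ↔ ξ = 0)
    (hhom : ∀ t : ℝ, 0 < t → ∀ ξ : Fin d → ℝ,
      R (fun k => t ^ (1 / (2 * (m k : ℝ))) * ξ k) = t * R ξ)
    (Rs : (Fin d → ℝ) → ℝ)
    (hRs : ∀ x : Fin d → ℝ, IsLUB {y : ℝ | ∃ ξ : Fin d → ℝ, y = ξ ⬝ᵥ x - R ξ} (Rs x)) :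
    ∃ C : ℝ, 0 < C ∧ ∀ x : Fin d → ℝ,
      C⁻¹ * (∑ k, |x k| ^ ((2 * (m k : ℝ)) / (2 * (m k : ℝ) - 1))) ≤ Rs x ∧
      Rs x ≤ C * (∑ k, |x k| ^ ((2 * (m k : ℝ)) / (2 * (m k : ℝ) - 1))) := by
  set α : Fin d → ℝ := fun k => 2 * (m k : ℝ)
  have hα : ∀ k, 1 < α k := fun k => by
    have : (1 : ℝ) ≤ m k := by exact_mod_cast hm k
    simp only [α]; linarith
  have hα₀ : ∀ k, 0 < α k := fun k => one_pos.trans (hα k)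
  have hhom' : IsAnisoHomogeneous α R := hhom
  have hpos : ∀ ξ, ξ ≠ 0 → 0 < R ξ := fun ξ hξ =>
    (hnonneg ξ).lt_of_ne fun h => hξ ((hdef ξ).1 h.symm)
  obtain ⟨c, hc, hcR⟩ := hhom'.exists_pos_mul_anisoNorm_le hα₀ hcont hpos
  obtain ⟨C, hRC, hC⟩ :=
    ((hhom'.eventually_le_mul_anisoNorm hα₀ hcont).and (eventually_gt_atTop 0)).exists
  have hupper : ∀ᶠ K in atTop, ∀ x, Rs x ≤ K * anisoNorm (fun k => (α k).conjExponent) x := by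
    filter_upwards [eventually_dotProduct_sub_mul_anisoNorm_le hc hα] with K hK x
    exact (hRs x).2 <| by rintro _ ⟨ξ, rfl⟩; linarith [hK ξ x, hcR ξ]
  have hlower : ∀ᶠ κ in 𝓝[>] 0, ∀ x, κ * anisoNorm (fun k => (α k).conjExponent) x ≤ Rs x := by
    filter_upwards [eventually_exists_mul_anisoNorm_le_dotProduct_sub hC hα] with κ hκ x
    obtain ⟨ξ, hξ⟩ := hκ x
    linarith [(hRs x).1 ⟨ξ, rfl⟩, hRC ξ]
  obtain ⟨C₀, hC₀, hup, hlow⟩ := ((eventually_gt_atTop 0).and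
    (hupper.and (tendsto_inv_atTop_nhdsGT_zero.eventually hlower))).exists
  exact ⟨C₀, hC₀, fun x => ⟨hlow x, hup x⟩⟩
end

section
/- Let m ∈ ℕ₊^d and let β ∈ ℕ^{2d} be split as (γ, β−γ) with γ ≤ β multi-indices in ℕ^d, and suppose |β : m| = Σₖ βₖ/mₖ = 2. Let R(ξ) = Σₖ ξₖ^{2mₖ}. Then there exist positive constants M, M' such that |ξ^γ ν^{β−γ}| ≤ M·R(ξ) + M'·R(ν) for all ξ, ν ∈ ℝ^d. -/
/-!
Weighted AM–GM applied to the $2d$ numbers $|ξ_k|^{2m_k}$ and $|ν_k|^{2m_k}$ with weights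
$γ_k/(2m_k)$ and $(β_k-γ_k)/(2m_k)$: the weights sum to $|β : m|/2 = 1$, and the weighted
geometric mean is exactly $|ξ^γ ν^{β-γ}|$. So $M = M' = 1$ works.
-/

open Finset

theorem abs_prod_pow_le_sum_weighted_abs_pow {ι : Type*} (s : Finset ι) (x : ι → ℝ)
    (a n : ι → ℕ) (hn : ∀ i ∈ s, n i ≠ 0) (h : ∑ i ∈ s, (a i : ℝ) / n i = 1) :
    |∏ i ∈ s, x i ^ a i| ≤ ∑ i ∈ s, (a i : ℝ) / n i * |x i| ^ n i := by
  have hpow : ∀ i ∈ s, (|x i| ^ n i) ^ ((a i : ℝ) / n i) = |x i| ^ a i := fun i hi => by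
    rw [← Real.rpow_natCast, ← Real.rpow_mul (abs_nonneg _),
      mul_div_cancel₀ _ (Nat.cast_ne_zero.mpr (hn i hi)), Real.rpow_natCast]
  calc |∏ i ∈ s, x i ^ a i| = ∏ i ∈ s, (|x i| ^ n i) ^ ((a i : ℝ) / n i) := by
        rw [abs_prod, prod_congr rfl hpow]; simp only [abs_pow]
    _ ≤ _ := Real.geom_mean_le_arith_mean_weighted s _ _ (fun i _ => by positivity) h
        (fun i _ => by positivity)

theorem abs_prod_pow_le_sum_abs_pow {ι : Type*} (s : Finset ι) (x : ι → ℝ)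
    (a n : ι → ℕ) (hn : ∀ i ∈ s, n i ≠ 0) (h : ∑ i ∈ s, (a i : ℝ) / n i = 1) :
    |∏ i ∈ s, x i ^ a i| ≤ ∑ i ∈ s, |x i| ^ n i := by
  refine (abs_prod_pow_le_sum_weighted_abs_pow s x a n hn h).trans
    (sum_le_sum fun i hi => mul_le_of_le_one_left (by positivity) ?_)
  rw [← h]
  exact single_le_sum (f := fun i => (a i : ℝ) / n i) (fun j _ => by positivity) hi

/-- Scaling inequality: if |β : m| = 2 and γ ≤ β, then
|ξ^γ ν^{β−γ}| ≤ M R(ξ) + M' R(ν) where R(ξ) = Σₖ ξₖ^{2mₖ}. -/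
theorem mixed_monomial_bound {d : ℕ}
    (m β γ : Fin d → ℕ) (hm : ∀ k, 0 < m k)
    (hγβ : ∀ k, γ k ≤ β k)
    (hβ : (∑ k, (β k : ℚ) / (m k : ℚ)) = 2) :
    ∃ M : ℝ, 0 < M ∧ ∃ M' : ℝ, 0 < M' ∧ ∀ ξ ν : Fin d → ℝ,
      |∏ k, ξ k ^ γ k * ν k ^ (β k - γ k)| ≤
        M * (∑ k, ξ k ^ (2 * m k)) + M' * (∑ k, ν k ^ (2 * m k)) := by
  refine ⟨1, one_pos, 1, one_pos, fun ξ ν => ?_⟩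
  set n : Fin d → ℕ := fun k => 2 * m k
  have hβ' : ∑ k, (β k : ℝ) / m k = 2 := by
    have := congrArg (Rat.cast : ℚ → ℝ) hβ
    push_cast at this
    exact this
  have hweights : ∑ i, ((Sum.elim γ (β - γ) i : ℕ) : ℝ) / (Sum.elim n n i : ℕ) = 1 := by
    simp only [n, Fintype.sum_sum_type, Sum.elim_inl, Sum.elim_inr, Pi.sub_apply,
      ← sum_add_distrib, ← add_div, Nat.cast_sub (hγβ _), add_sub_cancel, Nat.cast_mul,
      Nat.cast_ofNat, mul_comm (2 : ℝ), ← div_div, ← sum_div, hβ']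
    norm_num
  have hn : ∀ i ∈ univ, Sum.elim n n i ≠ 0 := fun i _ => by
    cases i <;> simp [n, (hm _).ne']
  simpa [n, Fintype.prod_sum_type, Fintype.sum_sum_type, prod_mul_distrib, pow_mul, sq_abs]
    using abs_prod_pow_le_sum_abs_pow univ (Sum.elim ξ ν) _ _ hn hweights
end

section
/- Let m ∈ ℕ₊^d, β, γ ∈ ℕ^d multi-indices with γ < β (γ ≤ β and γ ≠ β) and |β : m| = 2, and R(ξ) = Σₖ ξₖ^{2mₖ}. Then for every ε > 0 there exists M > 0 such that |ξ^γ ν^{β−γ}| ≤ ε·R(ξ) + M·R(ν) for all ξ, ν ∈ ℝ^d. -/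
/-!
Weighted AM–GM with the weights `α k / (2 m k)`, which sum to `1` when `|α : 2m| = 1`, bounds a
monomial `x ^ α` by `R x`. Applied to the pair `(ξ, ν)` with `α = (γ, β - γ)` this is the case
`ε = 1`. The anisotropic dilation `ξ k ↦ t ^ (1 / (2 m k)) * ξ k` multiplies `R ξ` by `t` but the
monomial only by `t ^ a` with `a = |γ : 2m| < 1` (as `γ < β`); taking `t ^ (1 - a) = ε` gives the
claim with `M = t ^ (-a)`.
-/

open Finset Real

theorem prod_rpow_le_sum_of_sum_eq_one {ι : Type*} (s : Finset ι) (w z : ι → ℝ)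
    (hw : ∀ i ∈ s, 0 ≤ w i) (hw' : ∑ i ∈ s, w i = 1) (hz : ∀ i ∈ s, 0 ≤ z i) :
    ∏ i ∈ s, z i ^ w i ≤ ∑ i ∈ s, z i := by
  refine (geom_mean_le_arith_mean_weighted s w z hw hw' hz).trans (sum_le_sum fun i hi => ?_)
  have hw1 : w i ≤ 1 := hw' ▸ single_le_sum hw hi
  exact mul_le_of_le_one_left (hz i hi) hw1

theorem pow_rpow_natCast_div {x : ℝ} (hx : 0 ≤ x) {n : ℕ} (hn : n ≠ 0) (c : ℕ) :
    (x ^ n) ^ ((c : ℝ) / n) = x ^ c := by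
  rw [div_eq_inv_mul, rpow_mul (pow_nonneg hx n), pow_rpow_inv_natCast hx hn, rpow_natCast]

section

variable {ι : Type*} [Fintype ι]

theorem abs_prod_pow_le_sum_pow_two_mul (m α : ι → ℕ) (hm : ∀ k, 0 < m k)
    (hα : ∑ k, (α k : ℝ) / (2 * m k) = 1) (x : ι → ℝ) :
    |∏ k, x k ^ α k| ≤ ∑ k, x k ^ (2 * m k) := by
  have hw : ∀ k ∈ univ, 0 ≤ (α k : ℝ) / (2 * m k) := fun k _ => by positivity
  have hz : ∀ k ∈ univ, 0 ≤ |x k| ^ (2 * m k) := fun k _ => by positivity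
  calc |∏ k, x k ^ α k| = ∏ k, (|x k| ^ (2 * m k)) ^ ((α k : ℝ) / (2 * m k)) := by
        rw [abs_prod]
        refine prod_congr rfl fun k _ => ?_
        have h := pow_rpow_natCast_div (abs_nonneg (x k)) (by have := hm k; omega : 2 * m k ≠ 0)
          (α k)
        push_cast at h
        rw [h, abs_pow]
    _ ≤ ∑ k, |x k| ^ (2 * m k) := prod_rpow_le_sum_of_sum_eq_one _ _ _ hw hα hz
    _ = ∑ k, x k ^ (2 * m k) := by simp only [pow_mul, sq_abs]

variable (m β γ : ι → ℕ) (hm : ∀ k, 0 < m k) (hγβ : ∀ k, γ k ≤ β k)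
  (hβ : ∑ k, (β k : ℝ) / m k = 2)
include hm hγβ hβ

theorem abs_prod_mixed_le_sum_add_sum (ξ ν : ι → ℝ) :
    |∏ k, ξ k ^ γ k * ν k ^ (β k - γ k)| ≤ ∑ k, ξ k ^ (2 * m k) + ∑ k, ν k ^ (2 * m k) := by
  have hα : ∑ k, ((Sum.elim γ (β - γ) k : ℕ) : ℝ) / (2 * (Sum.elim m m k : ℕ)) = 1 := by
    simp only [Fintype.sum_sum_type, Sum.elim_inl, Sum.elim_inr, Pi.sub_apply,
      Nat.cast_sub (hγβ _), ← sum_add_distrib, ← add_div, add_sub_cancel, div_mul_eq_div_div_swap,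
      ← sum_div, hβ]
    norm_num
  have h := abs_prod_pow_le_sum_pow_two_mul (Sum.elim m m) (Sum.elim γ (β - γ))
    (by rintro (k | k) <;> exact hm k) hα (Sum.elim ξ ν)
  simpa only [Fintype.prod_sum_type, Fintype.sum_sum_type, Sum.elim_inl, Sum.elim_inr,
    Pi.sub_apply, prod_mul_distrib] using h

theorem rpow_mul_abs_prod_mixed_le {t : ℝ} (ht : 0 < t) (ξ ν : ι → ℝ) :
    t ^ (∑ k, (γ k : ℝ) / (2 * m k)) * |∏ k, ξ k ^ γ k * ν k ^ (β k - γ k)| ≤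
      t * ∑ k, ξ k ^ (2 * m k) + ∑ k, ν k ^ (2 * m k) := by
  have hdilate : ∀ k (n : ℕ),
      (t ^ ((1 : ℝ) / (2 * m k)) * ξ k) ^ n = t ^ ((n : ℝ) / (2 * m k)) * ξ k ^ n := by
    intro k n
    rw [mul_pow, ← rpow_mul_natCast ht.le, one_div_mul_eq_div]
  have h := abs_prod_mixed_le_sum_add_sum m β γ hm hγβ hβ
    (fun k => t ^ ((1 : ℝ) / (2 * m k)) * ξ k) ν
  simp only [hdilate] at h
  convert h using 2
  · rw [rpow_sum_of_pos ht, ← abs_of_pos (prod_pos fun k _ => rpow_pos_of_pos ht _), ← abs_mul,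
      ← prod_mul_distrib]
    simp only [mul_assoc]
  · rw [mul_sum]
    refine sum_congr rfl fun k _ => ?_
    have : (0 : ℝ) < m k := by exact_mod_cast hm k
    push_cast
    rw [div_self (by positivity), rpow_one]

theorem sum_div_two_mul_lt_one (hne : γ ≠ β) : ∑ k, (γ k : ℝ) / (2 * m k) < 1 := by
  obtain ⟨k₀, hk₀⟩ := Function.ne_iff.mp hne
  have hpos : ∀ k, (0 : ℝ) < 2 * m k := fun k => by
    have : (0 : ℝ) < m k := by exact_mod_cast hm k
    positivity
  calc ∑ k, (γ k : ℝ) / (2 * m k) < ∑ k, (β k : ℝ) / (2 * m k) := by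
        refine sum_lt_sum (fun k _ => ?_) ⟨k₀, mem_univ _, ?_⟩
        · exact div_le_div_of_nonneg_right (by exact_mod_cast hγβ k) (hpos k).le
        · exact div_lt_div_of_pos_right (by exact_mod_cast (hγβ k₀).lt_of_ne hk₀) (hpos k₀)
    _ = 1 := by
        simp only [div_mul_eq_div_div_swap, ← sum_div, hβ]
        norm_num

end

/-- Scaling inequality with small parameter: if |β : m| = 2 and γ < β, then for every ε > 0
there is M > 0 with |ξ^γ ν^{β−γ}| ≤ ε R(ξ) + M R(ν), R(ξ) = Σₖ ξₖ^{2mₖ}. -/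
theorem mixed_monomial_bound_eps {d : ℕ}
    (m β γ : Fin d → ℕ) (hm : ∀ k, 0 < m k)
    (hγβ : ∀ k, γ k ≤ β k) (hne : γ ≠ β)
    (hβ : (∑ k, (β k : ℚ) / (m k : ℚ)) = 2) :
    ∀ ε : ℝ, 0 < ε → ∃ M : ℝ, 0 < M ∧ ∀ ξ ν : Fin d → ℝ,
      |∏ k, ξ k ^ γ k * ν k ^ (β k - γ k)| ≤
        ε * (∑ k, ξ k ^ (2 * m k)) + M * (∑ k, ν k ^ (2 * m k)) := by
  intro ε hε
  have hβ' : ∑ k, (β k : ℝ) / m k = 2 := by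
    have h := congrArg (Rat.cast : ℚ → ℝ) hβ
    push_cast at h
    exact h
  set a := ∑ k, (γ k : ℝ) / (2 * m k)
  have ha : a < 1 := sum_div_two_mul_lt_one m β γ hm hγβ hβ' hne
  set t := ε ^ (1 - a)⁻¹
  have ht : 0 < t := rpow_pos_of_pos hε _
  have htε : t ^ (-a) * t = ε := by
    rw [← rpow_add_one ht.ne', neg_add_eq_sub, ← rpow_mul hε.le,
      inv_mul_cancel₀ (sub_ne_zero.2 ha.ne'), rpow_one]
  refine ⟨t ^ (-a), rpow_pos_of_pos ht _, fun ξ ν => ?_⟩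
  calc |∏ k, ξ k ^ γ k * ν k ^ (β k - γ k)|
      = t ^ (-a) * (t ^ a * |∏ k, ξ k ^ γ k * ν k ^ (β k - γ k)|) := by
        rw [← mul_assoc, ← rpow_add ht, neg_add_cancel, rpow_zero, one_mul]
    _ ≤ t ^ (-a) * (t * ∑ k, ξ k ^ (2 * m k) + ∑ k, ν k ^ (2 * m k)) := by
        gcongr
        exact rpow_mul_abs_prod_mixed_le m β γ hm hγβ hβ' ht ξ ν
    _ = ε * (∑ k, ξ k ^ (2 * m k)) + t ^ (-a) * (∑ k, ν k ^ (2 * m k)) := by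
        rw [mul_add, ← mul_assoc, htε]
end
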